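/- arXiv:2304.01499 — 8 statements merged into one kernel-verified Lean document; each statement's English description precedes it below -/
import Mathlib

section
/- Fix j ∈ {1,…,J} and assume I − P_{j−1} is invertible. Let (w_{1j},…,w_{Jj}) be the unique solution of the column-j system w_{ij} = P_{ij} + Σ_{k=1}^{j−1} P_{ik} w_{kj} (i = 1,…,J). Let θ_j, θ_{j+1}, …, θ_J ∈ ℝ be arbitrary and define (θ_1,…,θ_{j−1})ᵀ = (I − P_{j−1})^{−1} P_{[1:j−1],[j:J]} (θ_j,…,θ_J)ᵀ. Then the vector θ = (θ_1,…,θ_J) satisfies ξ̄_ℓ(θ) = 0 for every ℓ = 1,…,j−1, and ξ̄_j(θ) = −(1 − w_{jj}) θ_j + Σ_{i=j+1}^{J} u_{ji} θ_i, where u_{ji} := P_{ji} + Σ_{ℓ=1}^{j−1} P_{jℓ} [(I − P_{j−1})^{−1} P_{[1:j−1],i}]_ℓ. -/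
open Matrix Finset

/-- With `θ_j,…,θ_J` arbitrary and `(θ_1,…,θ_{j-1})ᵀ = (I-P_{j-1})⁻¹ P_{[1:j-1],[j:J]} (θ_j,…,θ_J)ᵀ`,
one has `ξ̄_ℓ(θ) = 0` for `ℓ < j` and
`ξ̄_j(θ) = -(1-w_{jj})θ_j + ∑_{i>j} u_{ji} θ_i` where
`u_{ji} = P_{ji} + ∑_{ℓ<j} P_{jℓ} [(I-P_{j-1})⁻¹ P_{[1:j-1],i}]_ℓ`. -/
theorem stmt1 (J : ℕ) (hJ : 0 < J) (P : Matrix (Fin J) (Fin J) ℝ) (j : Fin J)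
    (hinv : IsUnit (1 - (Matrix.of fun a b : {k : Fin J // k < j} => P a.1 b.1)).det)
    (w : Fin J → ℝ)
    (hw : ∀ i, w i = P i j + ∑ k : {k : Fin J // k < j}, P i k.1 * w k.1)
    (θ : Fin J → ℝ)
    (hθ : ∀ i : Fin J, ∀ h : i < j,
      θ i = ((1 - (Matrix.of fun a b : {k : Fin J // k < j} => P a.1 b.1))⁻¹ *ᵥ
        (fun a : {k : Fin J // k < j} =>
          ∑ b : {k : Fin J // j ≤ k}, P a.1 b.1 * θ b.1)) ⟨i, h⟩) :
    (∀ l : Fin J, l < j → (∑ k, P l k * θ k) - θ l = 0) ∧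
    ((∑ k, P j k * θ k) - θ j =
      -(1 - w j) * θ j +
        ∑ i ∈ Finset.univ.filter (fun i : Fin J => j < i),
          (P j i + ∑ l : {k : Fin J // k < j}, P j l.1 *
            (((1 - (Matrix.of fun a b : {k : Fin J // k < j} => P a.1 b.1))⁻¹ *ᵥ
              (fun a : {k : Fin J // k < j} => P a.1 i)) l)) * θ i) := by
  classical
  set Q : Matrix {k : Fin J // k < j} {k : Fin J // k < j} ℝ :=
    Matrix.of fun a b => P a.1 b.1 with hQ
  set A : Matrix {k : Fin J // k < j} {k : Fin J // k < j} ℝ := 1 - Q with hAdef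
  set N := A⁻¹ with hNdef
  set v : {k : Fin J // k < j} → ℝ :=
    fun a => ∑ b : {k : Fin J // j ≤ k}, P a.1 b.1 * θ b.1 with hvdef
  have hsplit : ∀ f : Fin J → ℝ, ∑ k, f k =
      (∑ k : {k : Fin J // k < j}, f k.1) + ∑ k : {k : Fin J // j ≤ k}, f k.1 := by
    intro f
    rw [← Finset.sum_filter_add_sum_filter_not univ (fun k => k < j) f]
    congr 1
    · exact (Finset.sum_subtype (p := fun k => k < j) _ (by simp) f)
    · exact (Finset.sum_subtype (p := fun k => j ≤ k) _ (by simp [not_lt]) f)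
  have hθ' : (fun a : {k : Fin J // k < j} => θ a.1) = N *ᵥ v := by
    funext a; exact hθ a.1 a.2
  have hAv : A *ᵥ (N *ᵥ v) = v := by
    rw [Matrix.mulVec_mulVec, Matrix.mul_nonsing_inv _ hinv, Matrix.one_mulVec]
  -- part 1 key: for a : sub, θ a = ∑ Q a k θ k + v a
  have key1 : ∀ a : {k : Fin J // k < j},
      θ a.1 = (∑ k : {k : Fin J // k < j}, P a.1 k.1 * θ k.1) + v a := by
    intro a
    have h := congrFun hAv a
    rw [← hθ'] at h
    simp only [hAdef, Matrix.sub_mulVec, Matrix.one_mulVec, Pi.sub_apply] at h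
    have hQm : (Q *ᵥ fun a : {k : Fin J // k < j} => θ a.1) a
        = ∑ k : {k : Fin J // k < j}, P a.1 k.1 * θ k.1 := by
      simp [Matrix.mulVec, dotProduct, hQ]
    rw [hQm] at h
    linarith
  have part1 : ∀ l : Fin J, l < j → (∑ k, P l k * θ k) - θ l = 0 := by
    intro l hl
    rw [hsplit (fun k => P l k * θ k)]
    have := key1 ⟨l, hl⟩
    simp only [hvdef] at this ⊢
    linarith
  refine ⟨part1, ?_⟩
  -- w restricted
  have hw' : (fun a : {k : Fin J // k < j} => w a.1) = N *ᵥ (fun a => P a.1 j) := by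
    have h1 : A *ᵥ (fun a : {k : Fin J // k < j} => w a.1) = fun a => P a.1 j := by
      funext a
      have := hw a.1
      simp only [hAdef, Matrix.sub_mulVec, Matrix.one_mulVec, Pi.sub_apply]
      have hQm : (Q *ᵥ fun a : {k : Fin J // k < j} => w a.1) a
          = ∑ k : {k : Fin J // k < j}, P a.1 k.1 * w k.1 := by
        simp [Matrix.mulVec, dotProduct, hQ]
      rw [hQm]
      linarith
    have := congrArg (fun x => N *ᵥ x) h1
    simp only [Matrix.mulVec_mulVec] at this
    rw [hNdef, Matrix.nonsing_inv_mul _ hinv, Matrix.one_mulVec] at this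
    exact this
  -- linearity
  set c : Fin J → ℝ := fun b => ∑ k : {k : Fin J // k < j},
    P j k.1 * ((N *ᵥ fun a : {k : Fin J // k < j} => P a.1 b) k) with hcdef
  have hlin : (∑ k : {k : Fin J // k < j}, P j k.1 * θ k.1)
      = ∑ b : {k : Fin J // j ≤ k}, θ b.1 * c b.1 := by
    have : ∀ k : {k : Fin J // k < j}, θ k.1 = (N *ᵥ v) k := fun k => congrFun hθ' k
    calc (∑ k : {k : Fin J // k < j}, P j k.1 * θ k.1)
        = ∑ k : {k : Fin J // k < j}, P j k.1 * ∑ m, N k m * v m := by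
          refine Finset.sum_congr rfl fun k _ => ?_
          rw [this k]; rfl
      _ = ∑ k : {k : Fin J // k < j}, ∑ m, ∑ b : {k : Fin J // j ≤ k},
            P j k.1 * (N k m * (P m.1 b.1 * θ b.1)) := by
          refine Finset.sum_congr rfl fun k _ => ?_
          rw [Finset.mul_sum]
          refine Finset.sum_congr rfl fun m _ => ?_
          simp only [hvdef, Finset.mul_sum]
      _ = ∑ k : {k : Fin J // k < j}, ∑ b : {k : Fin J // j ≤ k}, ∑ m,
            P j k.1 * (N k m * (P m.1 b.1 * θ b.1)) :=
          Finset.sum_congr rfl fun k _ => Finset.sum_comm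
      _ = ∑ b : {k : Fin J // j ≤ k}, ∑ k : {k : Fin J // k < j}, ∑ m,
            P j k.1 * (N k m * (P m.1 b.1 * θ b.1)) := Finset.sum_comm
      _ = ∑ b : {k : Fin J // j ≤ k}, θ b.1 * c b.1 := by
          refine Finset.sum_congr rfl fun b _ => ?_
          simp only [hcdef, Matrix.mulVec, dotProduct, Finset.mul_sum]
          refine Finset.sum_congr rfl fun k _ => ?_
          refine Finset.sum_congr rfl fun m _ => ?_
          ring
  -- split β-sums at b = j
  have hmem : j ∈ univ.filter (fun k : Fin J => j ≤ k) := by simp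
  have hdiff : (univ.filter (fun k : Fin J => j ≤ k)) \ {j}
      = univ.filter (fun k : Fin J => j < k) := by
    ext x; simp [lt_iff_le_and_ne, eq_comm, and_comm]
  have hβsplit : ∀ g : Fin J → ℝ, (∑ b : {k : Fin J // j ≤ k}, g b.1)
      = g j + ∑ i ∈ univ.filter (fun i : Fin J => j < i), g i := by
    intro g
    rw [show (∑ b : {k : Fin J // j ≤ k}, g b.1)
        = ∑ b ∈ univ.filter (fun k : Fin J => j ≤ k), g b from
        (Finset.sum_subtype (p := fun k => j ≤ k) _ (by simp) g).symm,
      ← Finset.add_sum_erase _ g hmem]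
    congr 1
    rw [Finset.erase_eq, hdiff]
  -- w j identity
  have hwj : w j = P j j + c j := by
    rw [hw j]
    congr 1
    simp only [hcdef]
    refine Finset.sum_congr rfl fun k _ => ?_
    rw [congrFun hw' k]
  -- finish
  rw [hsplit (fun k => P j k * θ k), hβsplit (fun k => P j k * θ k), hlin,
    hβsplit (fun b => θ b * c b), hwj]
  rw [Finset.sum_congr rfl (fun i _ => show (P j i + c i) * θ i = P j i * θ i + θ i * c i by ring),
    Finset.sum_add_distrib]
  ring
end

section
/- Fix j ∈ {1,…,J}. Suppose λ = α + Pᵀλ and suppose (w_{1j},…,w_{Jj}) satisfies the column-j system w_{ij} = P_{ij} + Σ_{k=1}^{j−1} P_{ik} w_{kj} for i = 1,…,J. Let u = (w_{1j},…,w_{j−1,j}, 1, 0, …, 0) ∈ ℝ^J (the j-th coordinate equals 1 and coordinates j+1,…,J equal 0). Then σ_j² = 2 Q*(u), where σ_j² := Σ_{i<j} α_i ( w_{ij}² c_{e,i}² + w_{ij}(1−w_{ij}) ) + α_j c_{e,j}² + Σ_{i>j} λ_i ( w_{ij}² c_{s,i}² + w_{ij}(1−w_{ij}) ) + λ_j (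 c_{s,j}²(1−w_{jj})² + w_{jj}(1−w_{jj}) ). -/
open Matrix Finset

/-- `ξ*_i(θ)` from the paper. -/
noncomputable def xistar {J : ℕ} (P : Matrix (Fin J) (Fin J) ℝ) (cs2 : Fin J → ℝ)
    (i : Fin J) (θ : Fin J → ℝ) : ℝ :=
  cs2 i * ((∑ k, P i k * θ k) - θ i) ^ 2 + (∑ k, P i k * θ k ^ 2) - (∑ k, P i k * θ k) ^ 2

/-- `Q*(θ) = (1/2) ∑_i (α_i γ*_i(θ_i) + λ_i ξ*_i(θ))` with `γ*_i(θ_i) = c_{e,i}² θ_i²`. -/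
noncomputable def Qstar {J : ℕ} (P : Matrix (Fin J) (Fin J) ℝ) (α lam ce2 cs2 : Fin J → ℝ)
    (θ : Fin J → ℝ) : ℝ :=
  (1 / 2) * ∑ i, (α i * (ce2 i * θ i ^ 2) + lam i * xistar P cs2 i θ)

/-- The vector `u = (w_{1j},…,w_{j-1,j}, 1, 0, …, 0)`. -/
noncomputable def uvec {J : ℕ} (w : Fin J → ℝ) (j : Fin J) : Fin J → ℝ :=
  fun k => if k < j then w k else if k = j then 1 else 0

/-- `σ_j² = 2 Q*(w_{1j},…,w_{j-1,j},1,0,…,0)`. -/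
theorem stmt2 (J : ℕ) (hJ : 0 < J) (P : Matrix (Fin J) (Fin J) ℝ)
    (α lam ce2 cs2 : Fin J → ℝ) (j : Fin J)
    (htraffic : ∀ i, lam i = α i + ∑ k, P k i * lam k)
    (w : Fin J → ℝ)
    (hw : ∀ i, w i = P i j + ∑ k ∈ Finset.univ.filter (fun k : Fin J => k < j), P i k * w k) :
    (∑ i ∈ Finset.univ.filter (fun i : Fin J => i < j),
        α i * (w i ^ 2 * ce2 i + w i * (1 - w i)))
      + α j * ce2 j
      + (∑ i ∈ Finset.univ.filter (fun i : Fin J => j < i),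
          lam i * (w i ^ 2 * cs2 i + w i * (1 - w i)))
      + lam j * (cs2 j * (1 - w j) ^ 2 + w j * (1 - w j))
    = 2 * Qstar P α lam ce2 cs2 (uvec w j) := by
  set u := uvec w j with hu_def
  -- Fact 1: ∑ k, P i k * u k = w i
  have hu : ∀ i, ∑ k, P i k * u k = w i := by
    intro i
    have hpt : ∀ k : Fin J, P i k * u k
        = (if k < j then P i k * w k else 0) + (if k = j then P i k else 0) := by
      intro k
      rcases lt_trichotomy k j with h | h | h
      · simp [hu_def, uvec, h, ne_of_lt h]
      · simp [hu_def, uvec, h, lt_irrefl]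
      · simp [hu_def, uvec, not_lt_of_gt h, (ne_of_gt h)]
    rw [hw i]
    calc ∑ k, P i k * u k
        = (∑ k, if k < j then P i k * w k else 0) + ∑ k, if k = j then P i k else 0 := by
          simp_rw [hpt, Finset.sum_add_distrib]
      _ = (∑ k ∈ Finset.univ.filter (fun k : Fin J => k < j), P i k * w k) + P i j := by
          rw [← Finset.sum_filter, Finset.sum_ite_eq' Finset.univ j (fun k => P i k),
            if_pos (Finset.mem_univ j)]
      _ = P i j + ∑ k ∈ Finset.univ.filter (fun k : Fin J => k < j), P i k * w k := by ring
  -- Fact 2: traffic equation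
  have hB : ∀ f : Fin J → ℝ,
      (∑ i, lam i * ∑ k, P i k * f k) = ∑ k, (lam k - α k) * f k := by
    intro f
    simp_rw [Finset.mul_sum]
    rw [Finset.sum_comm]
    refine Finset.sum_congr rfl fun k _ => ?_
    have h2 : ∑ i, P i k * lam i = lam k - α k := by
      have := htraffic k
      linarith [this]
    calc ∑ i, lam i * (P i k * f k) = (∑ i, P i k * lam i) * f k := by
          rw [Finset.sum_mul]; exact Finset.sum_congr rfl fun i _ => by ring
      _ = (lam k - α k) * f k := by rw [h2]
  -- Fact 3: the linear correction sums to zero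
  have hC : ∑ i, (lam i * w i - (lam i - α i) * u i) = 0 := by
    have h := hB u
    simp_rw [hu] at h
    rw [Finset.sum_sub_distrib, h, sub_self]
  -- Compute 2 Q* as a single sum
  have key : 2 * Qstar P α lam ce2 cs2 u
      = ∑ i, (α i * (ce2 i * u i ^ 2) + lam i * (cs2 i * (w i - u i) ^ 2 - w i ^ 2)
          + (lam i - α i) * u i ^ 2) := by
    unfold Qstar xistar
    have expand : ∑ i, (α i * (ce2 i * u i ^ 2)
        + lam i * (cs2 i * ((∑ k, P i k * u k) - u i) ^ 2 + (∑ k, P i k * u k ^ 2)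
          - (∑ k, P i k * u k) ^ 2))
        = (∑ i, (α i * (ce2 i * u i ^ 2) + lam i * (cs2 i * (w i - u i) ^ 2 - w i ^ 2)))
          + ∑ i, lam i * ∑ k, P i k * u k ^ 2 := by
      rw [← Finset.sum_add_distrib]
      refine Finset.sum_congr rfl fun i _ => ?_
      rw [hu i]; ring
    rw [show (2 : ℝ) * (1 / 2 * (∑ i, (α i * (ce2 i * u i ^ 2)
        + lam i * (cs2 i * ((∑ k, P i k * u k) - u i) ^ 2 + (∑ k, P i k * u k ^ 2)
          - (∑ k, P i k * u k) ^ 2))))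
      = ∑ i, (α i * (ce2 i * u i ^ 2)
        + lam i * (cs2 i * ((∑ k, P i k * u k) - u i) ^ 2 + (∑ k, P i k * u k ^ 2)
          - (∑ k, P i k * u k) ^ 2)) from by ring]
    rw [expand, hB (fun k => u k ^ 2), ← Finset.sum_add_distrib]
  -- Rewrite LHS as a single sum
  have hmain : (∑ i ∈ Finset.univ.filter (fun i : Fin J => i < j),
        α i * (w i ^ 2 * ce2 i + w i * (1 - w i)))
      + α j * ce2 j
      + (∑ i ∈ Finset.univ.filter (fun i : Fin J => j < i),
          lam i * (w i ^ 2 * cs2 i + w i * (1 - w i)))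
      + lam j * (cs2 j * (1 - w j) ^ 2 + w j * (1 - w j))
      = ∑ i, ((α i * (ce2 i * u i ^ 2) + lam i * (cs2 i * (w i - u i) ^ 2 - w i ^ 2)
          + (lam i - α i) * u i ^ 2) + (lam i * w i - (lam i - α i) * u i)) := by
    have h1 : α j * ce2 j = ∑ i, if i = j then α i * ce2 i else 0 := by
      rw [Finset.sum_ite_eq' Finset.univ j, if_pos (Finset.mem_univ j)]
    have h2 : lam j * (cs2 j * (1 - w j) ^ 2 + w j * (1 - w j))
        = ∑ i, if i = j then lam i * (cs2 i * (1 - w i) ^ 2 + w i * (1 - w i)) else 0 := by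
      rw [Finset.sum_ite_eq' Finset.univ j, if_pos (Finset.mem_univ j)]
    rw [h1, h2, Finset.sum_filter, Finset.sum_filter, ← Finset.sum_add_distrib,
      ← Finset.sum_add_distrib, ← Finset.sum_add_distrib]
    refine Finset.sum_congr rfl fun i _ => ?_
    rcases lt_trichotomy i j with h | h | h
    · simp only [hu_def, uvec, if_pos h, if_neg (not_lt_of_gt h), if_neg (ne_of_lt h),
        if_neg (ne_of_gt h)]
      ring
    · subst h
      simp only [hu_def, uvec, lt_irrefl, if_false, if_true, ite_true, ite_false, if_pos rfl]
      ring
    · simp only [hu_def, uvec, if_pos h, if_neg (not_lt_of_gt h), if_neg (ne_of_gt h),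
        if_neg (ne_of_lt h)]
      ring
  rw [hmain, Finset.sum_add_distrib, hC, add_zero, key]
end

section
/- Let T be a nonnegative random variable with T ≤ M almost surely for some M > 0, ℙ(T > 0) = 1, 𝔼[T] = 1 and Var(T) = c². Let γ : ℝ → ℝ be a function satisfying e^{θ} 𝔼[e^{−γ(θ) T}] = 1 for every θ ∈ ℝ. Then γ(θ) → 0 as θ → 0, and (γ(θ) − θ − (1/2) c² θ²)/θ² → 0 as θ → 0 (θ ≠ 0). -/
open MeasureTheory Filter Topology

lemma hcub (u : ℝ) (hu : |u| ≤ 1) : |Real.exp (-u) - (1 - u + u^2/2)| ≤ |u|^3 := by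
  have h := Real.exp_bound (x := -u) (by simpa using hu) (n := 3) (by norm_num)
  simp only [Finset.sum_range_succ, Finset.sum_range_zero] at h
  norm_num [Nat.factorial] at h
  have h3 : (1:ℝ) + -u + u^2/2 = 1 - u + u^2/2 := by ring
  rw [h3] at h
  nlinarith [pow_nonneg (abs_nonneg u) 3]

set_option maxHeartbeats 2000000 in
/-- If `T` is bounded, a.s. strictly positive, with mean `1` and variance `c²`, and
`γ(θ)` solves `e^θ 𝔼[e^{-γ(θ)T}] = 1` for all `θ`, then `γ(θ) → 0` as `θ → 0` and
`(γ(θ) - θ - (1/2)c²θ²)/θ² → 0` as `θ → 0`, `θ ≠ 0`. -/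
theorem stmt5 {Ω : Type*} [MeasurableSpace Ω] (μ : Measure Ω) [IsProbabilityMeasure μ]
    (T : Ω → ℝ) (hTmeas : Measurable T) (M c : ℝ) (hM : 0 < M)
    (hT0 : ∀ᵐ ω ∂μ, 0 ≤ T ω) (hTM : ∀ᵐ ω ∂μ, T ω ≤ M)
    (hTpos : μ {ω | 0 < T ω} = 1)
    (hmean : ∫ ω, T ω ∂μ = 1)
    (hvar : ProbabilityTheory.variance T μ = c ^ 2)
    (γ : ℝ → ℝ)
    (hγ : ∀ θ : ℝ, Real.exp θ * ∫ ω, Real.exp (-(γ θ) * T ω) ∂μ = 1) :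
    Tendsto γ (𝓝 0) (𝓝 0) ∧
    Tendsto (fun θ : ℝ => (γ θ - θ - (1 / 2) * c ^ 2 * θ ^ 2) / θ ^ 2)
      (𝓝[≠] 0) (𝓝 0) := by
  set f : ℝ → ℝ := fun x => ∫ ω, Real.exp (-x * T ω) ∂μ with hfdef
  -- basic integrability
  have hTb : ∀ᵐ ω ∂μ, ‖T ω‖ ≤ M := by
    filter_upwards [hT0, hTM] with ω h0 h1
    rw [Real.norm_eq_abs, abs_of_nonneg h0]; exact h1
  have hTint : Integrable T μ :=
    (integrable_const M).mono' hTmeas.aestronglyMeasurable hTb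
  have hT2int : Integrable (fun ω => T ω ^ 2) μ := by
    refine (integrable_const (M^2)).mono' (hTmeas.pow_const 2).aestronglyMeasurable ?_
    filter_upwards [hT0, hTM] with ω h0 h1
    rw [Real.norm_eq_abs, abs_of_nonneg (by positivity)]
    nlinarith
  have hexpint : ∀ x : ℝ, Integrable (fun ω => Real.exp (-x * T ω)) μ := by
    intro x
    refine (integrable_const (Real.exp (|x| * M))).mono'
      ((hTmeas.const_mul (-x)).exp.aestronglyMeasurable) ?_
    filter_upwards [hT0, hTM] with ω h0 h1
    rw [Real.norm_eq_abs, abs_of_nonneg (Real.exp_pos _).le]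
    apply Real.exp_le_exp.2
    have hax : -x ≤ |x| := neg_le_abs x
    nlinarith [abs_nonneg x, mul_nonneg (abs_nonneg x) (sub_nonneg.2 h1),
      mul_nonneg (sub_nonneg.2 hax) h0]
  have hf0 : f 0 = 1 := by simp [hfdef]
  have hfγ : ∀ θ : ℝ, f (γ θ) = Real.exp (-θ) := by
    intro θ
    have h := hγ θ
    rw [show f (γ θ) = Real.exp (-θ) * (Real.exp θ * f (γ θ)) from by
      rw [← mul_assoc, ← Real.exp_add, neg_add_cancel, Real.exp_zero, one_mul]]
    have h' : Real.exp θ * f (γ θ) = 1 := h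
    rw [h', mul_one]
  -- strict antitonicity
  have hanti : StrictAnti f := by
    intro x y hxy
    have hsub : 0 < ∫ ω, (Real.exp (-x * T ω) - Real.exp (-y * T ω)) ∂μ := by
      rw [integral_pos_iff_support_of_nonneg_ae]
      · have hsup : {ω | 0 < T ω} ⊆ Function.support
            (fun ω => Real.exp (-x * T ω) - Real.exp (-y * T ω)) := by
          intro ω hω
          have : -y * T ω < -x * T ω := by
            have := Set.mem_setOf_eq ▸ hω
            nlinarith
          have := Real.exp_lt_exp.2 this
          simp only [Function.mem_support]
          intro hc
          nlinarith
        have hle : (1:ENNReal) ≤ μ (Function.support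
            (fun ω => Real.exp (-x * T ω) - Real.exp (-y * T ω))) :=
          le_trans (le_of_eq hTpos.symm) (measure_mono hsup)
        exact lt_of_lt_of_le zero_lt_one hle
      · filter_upwards [hT0] with ω h0
        have : -y * T ω ≤ -x * T ω := by nlinarith
        simpa using Real.exp_le_exp.2 this
      · exact (hexpint x).sub (hexpint y)
    have := (integral_sub (hexpint x) (hexpint y)) ▸ hsub
    simp only [hfdef]
    linarith [this]
    -- f y < f x
  have hmono : Antitone f := hanti.antitone
  -- Step 1: γ → 0
  have hγ0 : Tendsto γ (𝓝 0) (𝓝 0) := by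
    rw [tendsto_order]
    have hexp1 : Tendsto (fun θ : ℝ => Real.exp (-θ)) (𝓝 0) (𝓝 1) := by
      have := (Real.continuous_exp.comp continuous_neg).tendsto (0:ℝ)
      simpa [Function.comp_def] using this
    constructor
    · intro b hb
      have h1 : 1 < f b := by
        have := hanti hb
        rwa [hf0] at this
      filter_upwards [hexp1.eventually_lt_const h1] with θ hθ
      by_contra hcon
      push_neg at hcon
      have := hmono hcon
      rw [hfγ θ] at this
      linarith
    · intro b hb
      have h1 : f b < 1 := by
        have := hanti hb
        rwa [hf0] at this
      filter_upwards [hexp1.eventually_const_lt h1] with θ hθ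
      by_contra hcon
      push_neg at hcon
      have := hmono hcon
      rw [hfγ θ] at this
      linarith
  refine ⟨hγ0, ?_⟩
  have hmem2 : MemLp T 2 μ := MemLp.of_bound hTmeas.aestronglyMeasurable M hTb
  have hT2 : ∫ ω, T ω ^ 2 ∂μ = 1 + c ^ 2 := by
    have h := ProbabilityTheory.variance_eq_sub hmem2
    rw [hvar] at h
    simp only [Pi.pow_apply, hmean] at h
    linarith
  have hL5 : ∀ x : ℝ, |x| * M ≤ 1 → |f x - (1 - x + (1 + c^2) * x^2/2)| ≤ M^3 * |x|^3 := by
    intro x hx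
    have i1 : Integrable (fun ω => 1 - x * T ω) μ := (integrable_const 1).sub (hTint.const_mul x)
    have i2 : Integrable (fun ω => x^2/2 * T ω ^ 2) μ := hT2int.const_mul (x^2/2)
    have hpoly : Integrable (fun ω => 1 - x * T ω + x^2/2 * T ω ^ 2) μ := i1.add i2
    have hval : ∫ ω, (1 - x * T ω + x^2/2 * T ω ^ 2) ∂μ = 1 - x + (1 + c^2) * x^2/2 := by
      rw [integral_add i1 i2, integral_sub (integrable_const 1) (hTint.const_mul x),
        integral_const_mul, integral_const_mul, integral_const, hmean, hT2]
      simp [measure_univ]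
      ring
    have hint : ∫ ω, (Real.exp (-x * T ω) - (1 - x * T ω + x^2/2 * T ω ^ 2)) ∂μ
        = (∫ ω, Real.exp (-x * T ω) ∂μ) - (1 - x + (1 + c^2) * x^2/2) := by
      rw [integral_sub (hexpint x) hpoly, hval]
    rw [← hint]
    have hb := norm_integral_le_of_norm_le_const (μ := μ) (C := M^3 * |x|^3)
      (f := fun ω => Real.exp (-x * T ω) - (1 - x * T ω + x^2/2 * T ω ^ 2)) ?_
    · rw [Real.norm_eq_abs] at hb
      simpa [measure_univ] using hb
    · filter_upwards [hT0, hTM] with ω h0 h1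
      have hu : |x * T ω| ≤ 1 := by
        rw [abs_mul, abs_of_nonneg h0]
        calc |x| * T ω ≤ |x| * M := by nlinarith [abs_nonneg x]
          _ ≤ 1 := hx
      have hc := hcub (x * T ω) hu
      have heq : (1:ℝ) - x * T ω + (x * T ω)^2/2 = 1 - x * T ω + x^2/2 * T ω ^ 2 := by ring
      rw [heq] at hc
      rw [Real.norm_eq_abs, show -x * T ω = -(x * T ω) from neg_mul x (T ω)]
      calc |Real.exp (-(x * T ω)) - (1 - x * T ω + x^2/2 * T ω ^ 2)| ≤ |x * T ω|^3 := hc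
        _ ≤ M^3 * |x|^3 := by
          rw [abs_mul, abs_of_nonneg h0]
          have h3 : (|x| * T ω)^3 = |x|^3 * T ω ^3 := by ring
          rw [h3]
          have : T ω ^ 3 ≤ M ^ 3 := pow_le_pow_left₀ h0 h1 3
          nlinarith [pow_nonneg (abs_nonneg x) 3]
  have hrel : ∀ θ : ℝ, |γ θ| * M ≤ 1 →
      |Real.exp (-θ) - (1 - γ θ + (1 + c^2) * (γ θ)^2/2)| ≤ M^3 * |γ θ|^3 := by
    intro θ hθ
    have h := hL5 (γ θ) hθ
    rwa [hfγ θ] at h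
  obtain ⟨a, hadef⟩ : ∃ a : ℝ, a = 1 + c^2 := ⟨_, rfl⟩
  simp only [← hadef] at hrel
  have ha1 : 1 ≤ a := by nlinarith [sq_nonneg c]
  have ha0 : 0 < a := by linarith
  obtain ⟨K1, hK1def⟩ : ∃ K1 : ℝ, K1 = 18*a + 216*M^3 + 2 := ⟨_, rfl⟩
  have hK1pos : 0 < K1 := by rw [hK1def]; positivity
  obtain ⟨K2, hK2def⟩ : ∃ K2 : ℝ, K2 = 216*M^3 + 1 + 4*a*K1 := ⟨_, rfl⟩
  have hK2pos : 0 < K2 := by rw [hK2def]; positivity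
  obtain ⟨δ, hδdef⟩ : ∃ δ : ℝ, δ = min (1/(M+1)) (min (1/(2*a)) (1/(2*(M^2+1)))) := ⟨_, rfl⟩
  have hδpos : 0 < δ := by rw [hδdef]; positivity
  -- eventual bound
  have hev : ∀ᶠ θ in 𝓝[≠] (0:ℝ),
      ‖(γ θ - θ - (1 / 2) * c ^ 2 * θ ^ 2) / θ ^ 2‖ ≤ K2 * |θ| := by
    have hevg : ∀ᶠ θ in 𝓝 (0:ℝ), |γ θ| < δ := by
      have := Metric.tendsto_nhds.1 hγ0 δ hδpos
      simpa [Real.dist_eq] using this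
    have hevθ : ∀ᶠ θ in 𝓝 (0:ℝ), |θ| < 1 := by
      have : Tendsto (fun θ : ℝ => θ) (𝓝 0) (𝓝 0) := tendsto_id
      have := Metric.tendsto_nhds.1 this 1 one_pos
      simpa [Real.dist_eq] using this
    filter_upwards [eventually_nhdsWithin_of_eventually_nhds hevg,
      eventually_nhdsWithin_of_eventually_nhds hevθ, self_mem_nhdsWithin]
      with θ hgδ hθ1 hne
    obtain ⟨g, hgdef⟩ : ∃ g : ℝ, g = γ θ := ⟨_, rfl⟩
    rw [← hgdef]
    -- small facts from δ
    rw [← hgdef] at hgδ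
    have hδ1 : δ ≤ 1/(M+1) := hδdef ▸ min_le_left _ _
    have hδ2 : δ ≤ 1/(2*a) := hδdef ▸ le_trans (min_le_right _ _) (min_le_left _ _)
    have hδ3 : δ ≤ 1/(2*(M^2+1)) := hδdef ▸ le_trans (min_le_right _ _) (min_le_right _ _)
    have hgM : |g| * M ≤ 1 := by
      have : |g| ≤ 1/(M+1) := le_trans hgδ.le hδ1
      have hM1 : 0 < M + 1 := by linarith
      have h1 : |g| * (M+1) ≤ 1 := by
        rw [← le_div_iff₀ hM1]; exact this
      nlinarith [abs_nonneg g]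
    have hag : a * |g| ≤ 1/2 := by
      have h1 : |g| ≤ 1/(2*a) := le_trans hgδ.le hδ2
      have := mul_le_mul_of_nonneg_left h1 ha0.le
      calc a * |g| ≤ a * (1/(2*a)) := this
        _ = 1/2 := by field_simp
    have hg1 : |g| ≤ 1 := by nlinarith [abs_nonneg g]
    have hg2M : |g|^2 * M^3 ≤ 1/4 := by
      have h1 : |g| ≤ 1/(2*(M^2+1)) := le_trans hgδ.le hδ3
      have h2 : |g|^2 ≤ (1/(2*(M^2+1)))^2 := by
        apply sq_le_sq' _ h1
        nlinarith [abs_nonneg g]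
      have h3 : (1/(2*(M^2+1)))^2 * M^3 ≤ 1/4 := by
        rw [div_pow, one_pow, div_mul_eq_mul_div, div_le_div_iff₀ (by positivity) (by norm_num)]
        nlinarith [sq_nonneg (M^2 - M), sq_nonneg M, sq_nonneg (M - 1)]
      nlinarith [pow_nonneg (hM.le) 3]
    -- the key relation
    have hstar : |g - a*g^2/2 - θ + θ^2/2| ≤ M^3*|g|^3 + |θ|^3 := by
      have h1 := hrel θ (hgdef ▸ hgM)
      have h2 := hcub θ hθ1.le
      rw [← hgdef] at h1
      obtain ⟨h1a, h1b⟩ := abs_le.1 h1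
      obtain ⟨h2a, h2b⟩ := abs_le.1 h2
      rw [abs_le]
      constructor <;> nlinarith
    obtain ⟨hsa, hsb⟩ := abs_le.1 hstar
    have hθa := le_abs_self θ
    have hθb := neg_abs_le θ
    have hga := le_abs_self g
    have hgb := neg_abs_le g
    have hsqg : |g|^2 = g^2 := sq_abs g
    have hsqθ : |θ|^2 = θ^2 := sq_abs θ
    have hθ3 : |θ|^3 ≤ |θ| := by
      calc |θ|^3 ≤ |θ|^1 := pow_le_pow_of_le_one (abs_nonneg θ) hθ1.le (by norm_num)
        _ = |θ| := pow_one _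
    have hθ32 : |θ|^3 ≤ θ^2 := by
      calc |θ|^3 ≤ |θ|^2 := pow_le_pow_of_le_one (abs_nonneg θ) hθ1.le (by norm_num)
        _ = θ^2 := hsqθ
    have haux1 : a*g^2/2 ≤ |g|/4 := by
      have := mul_le_mul_of_nonneg_right hag (abs_nonneg g)
      nlinarith [hsqg]
    have haux2 : M^3*|g|^3 ≤ |g|/4 := by
      have := mul_le_mul_of_nonneg_right hg2M (abs_nonneg g)
      nlinarith [hsqg]
    have haux4 : θ^2/2 ≤ |θ|/2 := by nlinarith [hsqθ, abs_nonneg θ]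
    -- crude bound |g| ≤ 6 |θ|
    have hMg0 : 0 ≤ M^3*|g|^3 := by positivity
    have hθ30 : 0 ≤ |θ|^3 := by positivity
    have hθsq0 : 0 ≤ θ^2 := sq_nonneg θ
    have hg6 : |g| ≤ 6 * |θ| := by
      have hag2 : 0 ≤ a*g^2/2 := by positivity
      rcases abs_cases g with ⟨he, _⟩ | ⟨he, _⟩ <;> rw [he] <;>
        linarith [hsa, hsb, haux1, haux2, hag2, hθ3, haux4, hθa, hθb, hMg0, hθ30, hθsq0]
    -- refined |g - θ| ≤ K1 θ²
    have h36 : g^2 ≤ 36*θ^2 := by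
      have h1 : |g| *|g| ≤ (6*|θ|)*(6*|θ|) := mul_self_le_mul_self (abs_nonneg g) hg6
      have h2 : |g| *|g| = g^2 := by rw [← sq_abs g]; ring
      have h3 : (6*|θ|)*(6*|θ|) = 36*θ^2 := by rw [show (6*|θ|)*(6*|θ|) = 36*(|θ|^2) from by ring, sq_abs]
      linarith
    have haux5 : a*g^2/2 ≤ 18*a*θ^2 := by
      linarith [mul_le_mul_of_nonneg_left h36 ha0.le]
    have hg3 : |g|^3 ≤ 216*|θ|^3 := by
      calc |g|^3 ≤ (6*|θ|)^3 := pow_le_pow_left₀ (abs_nonneg g) hg6 3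
        _ = 216*|θ|^3 := by ring
    have haux6 : M^3*|g|^3 ≤ 216*M^3*θ^2 := by
      have hM3 : 0 ≤ M^3 := by positivity
      linarith [mul_le_mul_of_nonneg_left hg3 hM3, mul_le_mul_of_nonneg_left hθ32 hM3]
    have hag2' : 0 ≤ a*g^2/2 := by positivity
    have hK1θ : K1*θ^2 = 18*a*θ^2 + 216*M^3*θ^2 + 2*θ^2 := by rw [hK1def]; ring
    have hgθK : |g - θ| ≤ K1*θ^2 := by
      rcases abs_cases (g - θ) with ⟨he, _⟩ | ⟨he, _⟩ <;> rw [he] <;>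
        linarith [hsa, hsb, haux5, haux6, hθ32, hag2', hθsq0, hMg0, hθ30, hK1θ]
    -- final numerator bound
    have h7 : |g + θ| ≤ 7*|θ| := by
      calc |g + θ| ≤ |g| + |θ| := abs_add_le g θ
        _ ≤ 7*|θ| := by linarith
    have hp1 : |g^2 - θ^2| ≤ 7*K1*|θ|^3 := by
      calc |g^2 - θ^2| = |g - θ| * |g + θ| := by rw [← abs_mul]; ring_nf
        _ ≤ (K1*θ^2) * (7*|θ|) := by
            apply mul_le_mul hgθK h7 (abs_nonneg _) (by positivity)
        _ = 7*K1*|θ|^3 := by rw [← hsqθ]; ring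
      done
    obtain ⟨hp1a, hp1b⟩ := abs_le.1 hp1
    have hnum : |g - θ - c^2*θ^2/2| ≤ K2*|θ|^3 := by
      have hid : g - θ - c^2*θ^2/2 = (g - a*g^2/2 - θ + θ^2/2) + (a/2)*(g^2-θ^2) := by
        rw [hadef]; ring
      have hb1 : (a/2)*(g^2-θ^2) ≤ (a/2)*(7*K1*|θ|^3) :=
        mul_le_mul_of_nonneg_left hp1b (by positivity)
      have hb2 : (a/2)*(-(7*K1*|θ|^3)) ≤ (a/2)*(g^2-θ^2) :=
        mul_le_mul_of_nonneg_left hp1a (by positivity)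
      have hg33 : M^3*|g|^3 ≤ 216*M^3*|θ|^3 := by
        have hM3 : 0 ≤ M^3 := by positivity
        linarith [mul_le_mul_of_nonneg_left hg3 hM3]
      have hpos : 0 ≤ a*K1*|θ|^3 :=
        mul_nonneg (mul_nonneg ha0.le hK1pos.le) (pow_nonneg (abs_nonneg θ) 3)
      have hMθ0 : 0 ≤ M^3*|θ|^3 := by positivity
      have hK2θ : K2*|θ|^3 = 216*M^3*|θ|^3 + |θ|^3 + 4*(a*K1*|θ|^3) := by rw [hK2def]; ring
      rw [hid, abs_le]
      constructor <;> linarith [hsa, hsb, hb1, hb2, hg33, hpos, hθ30, hMθ0, hK2θ]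
    -- divide by θ²
    have hθne : θ ≠ 0 := hne
    have habs2 : (0:ℝ) < |θ|^2 := pow_pos (abs_pos.2 hθne) 2
    have hnum' : |g - θ - (1/2)*c^2*θ^2| ≤ K2*|θ|^3 := by
      have he : g - θ - (1/2)*c^2*θ^2 = g - θ - c^2*θ^2/2 := by ring
      rw [he]; exact hnum
    rw [Real.norm_eq_abs, abs_div, abs_pow, div_le_iff₀ habs2]
    have he2 : K2 * |θ| * |θ|^2 = K2*|θ|^3 := by ring
    linarith [hnum']
  have hK : Tendsto (fun θ : ℝ => K2 * |θ|) (𝓝[≠] (0:ℝ)) (𝓝 0) := by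
    have h1 : Tendsto (fun θ : ℝ => K2 * |θ|) (𝓝 (0:ℝ)) (𝓝 (K2 * |(0:ℝ)|)) :=
      (continuous_const.mul continuous_abs).tendsto 0
    simpa using h1.mono_left nhdsWithin_le_nhds
  exact squeeze_zero_norm' hev hK
end

section
/- Fix a positive integer J, an index i ∈ {1,…,J}, and nonnegative reals p_0, p_1, …, p_J with p_0 + Σ_{k=1}^J p_k = 1. Let T be a nonnegative random variable with T ≤ M almost surely for some M > 0, ℙ(T > 0) = 1, 𝔼[T] = 1 and Var(T) = c_s². For θ ∈ ℝ^J set a(θ) := p_0 e^{−θ_i} + Σ_{k=1}^J p_k e^{θ_k − θ_i}, ξ̄(θ) := Σ_{k=1}^J p_k θ_k − θ_i, and ξ*(θ) := c_s² (Σ_{k=1}^J p_k θ_k − θ_i)² + Σ_{k=1}^J p_k θ_k² − (Σ_{k=1}^J p_k θ_k)². Let ξ : ℝ^J → ℝ satisfy a(θ) 𝔼[e^{−ξ(θ) T}] = 1 for every θ ∈ ℝ^J. Then ξ(θ) → 0 as θ → 0, and (ξ(θ) − ξ̄(θ) − (1/2) ξ*(θ))/|θ|² → 0 as θ → 0 in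 ℝ^J with θ ≠ 0, where |θ| := Σ_{k=1}^J |θ_k|. -/
open MeasureTheory Filter Topology Finset

lemma exp_cubic_bound {u : ℝ} (hu : |u| ≤ 1) :
    |Real.exp u - (1 + u + u^2/2)| ≤ |u|^3 := by
  have h := Real.exp_bound hu (n := 3) (by norm_num)
  have hs : ∑ m ∈ range 3, u ^ m / m.factorial = 1 + u + u^2/2 := by
    simp [Finset.sum_range_succ]
  have hf : ((Nat.factorial 3 : ℕ) : ℝ) = 6 := by norm_num [Nat.factorial]
  rw [hs, hf] at h
  have h3 : (0:ℝ) ≤ |u|^3 := by positivity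
  calc |Real.exp u - (1 + u + u ^ 2 / 2)| ≤ _ := h
    _ ≤ |u|^3 := by push_cast; nlinarith


lemma tendsto_xi_zero {α : Type*} {l : Filter α} (φ : ℝ → ℝ) (A x : α → ℝ) (δ : ℝ)
    (hδpos : 0 < δ)
    (hφanti : Antitone φ)
    (hφup : ∀ ε : ℝ, 0 < ε → ε ≤ δ → φ ε ≤ 1 - ε/2)
    (hφdn : ∀ ε : ℝ, 0 < ε → ε ≤ δ → 1 + ε/2 ≤ φ (-ε))
    (hApos : ∀ a, 0 < A a)
    (hAF : ∀ a, A a * φ (x a) = 1)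
    (hAt : Tendsto A l (𝓝 1)) : Tendsto x l (𝓝 0) := by
  rw [Metric.tendsto_nhds]
  intro ε hε
  set ε' : ℝ := min (min (ε/2) δ) 1 with hε'def
  have hε'pos : 0 < ε' := lt_min (lt_min (by linarith) hδpos) one_pos
  have hε'δ : ε' ≤ δ := le_trans (min_le_left _ _) (min_le_right _ _)
  have hε'ε : ε' < ε := lt_of_le_of_lt (le_trans (min_le_left _ _) (min_le_left _ _))
    (by linarith)
  have hε'1 : ε' ≤ 1 := min_le_right _ _
  have hev : ∀ᶠ a in l, |A a - 1| < ε'/8 := by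
    have h := Metric.tendsto_nhds.1 hAt (ε'/8) (by positivity)
    simpa [Real.dist_eq] using h
  filter_upwards [hev] with a ha
  rw [Real.dist_eq, sub_zero]
  have hA1 := abs_lt.1 ha
  have hAa := hApos a
  have hA12 : (1:ℝ)/2 ≤ A a := by nlinarith
  have hφξ : φ (x a) * A a = 1 := by
    have := hAF a; nlinarith [this]
  have hφlow : 1 - ε'/2 < φ (x a) := by nlinarith
  have hφhigh : φ (x a) < 1 + ε'/2 := by nlinarith
  by_contra hcon
  push_neg at hcon
  rcases le_or_gt ε (x a) with hcase | hcase
  · have h1 : ε' ≤ x a := le_trans hε'ε.le hcase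
    have := hφanti h1
    have h2 := hφup ε' hε'pos hε'δ
    linarith
  · have h1 : x a ≤ -ε' := by
      rcases le_or_gt 0 (x a) with h | h
      · exfalso; rw [abs_of_nonneg h] at hcon; linarith
      · rw [abs_of_neg h] at hcon; linarith
    have := hφanti h1
    have h2 := hφdn ε' hε'pos hε'δ
    linarith


set_option maxHeartbeats 400000 in
open Asymptotics in
lemma master_littleO {α : Type*} {l : Filter α} (c B : ℝ) (hc : 1/2 ≤ c) (hB : 1 ≤ B)
    (s m q x F A : α → ℝ)
    (hs0 : ∀ a, 0 ≤ s a)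
    (hm : ∀ a, |m a| ≤ 2 * s a)
    (hq : ∀ a, |q a| ≤ 6 * (s a)^2)
    (hAF : ∀ a, A a * F a = 1)
    (he1 : ∀ᶠ a in l, |A a - (1 + m a + q a/2)| ≤ 8 * (s a)^3)
    (he2 : ∀ᶠ a in l, |F a - (1 - x a + c*(x a)^2)| ≤ B * |x a|^3)
    (hst : Tendsto s l (𝓝 0))
    (hxt : Tendsto x l (𝓝 0))
    (hAt : Tendsto A l (𝓝 1)) :
    (fun a => x a - m a - q a/2 - (c-1)*(m a)^2) =o[l] (fun a => (s a)^2) := by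
  have hApos : ∀ a, A a ≠ 0 := by
    intro a h
    have := hAF a
    rw [h, zero_mul] at this
    norm_num at this
  -- linear bound on x
  set δ : ℝ := min 1 (1/(2*(c+B))) with hδdef
  have hcB : (0:ℝ) < c + B := by linarith
  have hδpos : 0 < δ := lt_min one_pos (by positivity)
  have hδ1 : δ ≤ 1 := min_le_left _ _
  have hcBδ : (c+B)*δ ≤ 1/2 := by
    have h1 : δ ≤ 1/(2*(c+B)) := min_le_right _ _
    rw [le_div_iff₀ (by positivity)] at h1
    linarith
  have hev_s : ∀ η : ℝ, 0 < η → ∀ᶠ a in l, s a < η := by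
    intro η hη
    have h := Metric.tendsto_nhds.1 hst η hη
    filter_upwards [h] with a ha
    rw [Real.dist_eq, sub_zero] at ha
    exact lt_of_le_of_lt (le_abs_self _) ha
  have hev_x : ∀ᶠ a in l, |x a| < δ := by
    have h := Metric.tendsto_nhds.1 hxt δ hδpos
    simpa [Real.dist_eq] using h
  have hev_A : ∀ᶠ a in l, (1:ℝ)/2 < A a := by
    have h := Metric.tendsto_nhds.1 hAt (1/2) (by norm_num)
    filter_upwards [h] with a ha
    rw [Real.dist_eq] at ha
    have := abs_lt.1 ha
    linarith [this.1]
  have hx52 : ∀ᶠ a in l, |x a| ≤ 52 * s a := by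
    filter_upwards [hev_s (1/26) (by norm_num), hev_x, hev_A, he1, he2]
      with a hsa hxa hAa h1 h2
    have hA1 : |A a - 1| ≤ 13 * s a := by
      have h3 := hm a
      have h4 := hq a
      have h5 := hs0 a
      have habs : |A a - 1| ≤ |A a - (1 + m a + q a/2)| + (|m a| + |q a|/2) := by
        have e : A a - 1 = (A a - (1 + m a + q a/2)) + (m a + q a/2) := by ring
        calc |A a - 1| = |(A a - (1 + m a + q a/2)) + (m a + q a/2)| := by rw [← e]
          _ ≤ |A a - (1 + m a + q a/2)| + |m a + q a/2| := abs_add_le _ _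
          _ ≤ |A a - (1 + m a + q a/2)| + (|m a| + |q a/2|) := by
              linarith [abs_add_le (m a) (q a/2)]
          _ = |A a - (1 + m a + q a/2)| + (|m a| + |q a|/2) := by
              rw [abs_div]; norm_num
      nlinarith
    have hid : (1 - F a) * A a = A a - 1 := by nlinarith [hAF a]
    have h1F : |1 - F a| ≤ 26 * s a := by
      have hh : |1 - F a| * A a = |A a - 1| := by
        rw [← hid, abs_mul, abs_of_pos (show (0:ℝ) < A a by linarith)]
      nlinarith [abs_nonneg (1 - F a), hs0 a]
    have hxabs : |x a| ≤ |1 - F a| + (c*(x a)^2 + |F a - (1 - x a + c*(x a)^2)|) := by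
      have e : x a = (1 - F a) + (c*(x a)^2 + (F a - (1 - x a + c*(x a)^2))) := by ring
      calc |x a| = |(1 - F a) + (c*(x a)^2 + (F a - (1 - x a + c*(x a)^2)))| := by rw [← e]
        _ ≤ |1 - F a| + |c*(x a)^2 + (F a - (1 - x a + c*(x a)^2))| := abs_add_le _ _
        _ ≤ |1 - F a| + (|c*(x a)^2| + |F a - (1 - x a + c*(x a)^2)|) := by
            linarith [abs_add_le (c*(x a)^2) (F a - (1 - x a + c*(x a)^2))]
        _ = |1 - F a| + (c*(x a)^2 + |F a - (1 - x a + c*(x a)^2)|) := by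
            rw [abs_of_nonneg (by positivity : (0:ℝ) ≤ c*(x a)^2)]
    have hx2 : (x a)^2 ≤ δ * |x a| := by nlinarith [abs_nonneg (x a), sq_abs (x a)]
    have hx3 : |x a|^3 ≤ δ * |x a| := by
      nlinarith [abs_nonneg (x a), sq_abs (x a), sq_nonneg (x a)]
    have hhalf : c*(x a)^2 + |F a - (1 - x a + c*(x a)^2)| ≤ |x a| / 2 := by
      have hb1 : c * (x a)^2 ≤ c * (δ * |x a|) :=
        mul_le_mul_of_nonneg_left hx2 (by linarith)
      have hb2 : |F a - (1 - x a + c*(x a)^2)| ≤ B * (δ * |x a|) :=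
        le_trans h2 (mul_le_mul_of_nonneg_left hx3 (by linarith))
      have hcb := mul_le_mul_of_nonneg_right hcBδ (abs_nonneg (x a))
      nlinarith [hb1, hb2, hcb]
    linarith [hxabs, h1F, hhalf]
  -- O and o facts
  have hnorm_s : ∀ a, ‖s a‖ = s a := fun a => by
    rw [Real.norm_eq_abs, abs_of_nonneg (hs0 a)]
  have hso : (fun a => s a) =o[l] (fun _ => (1:ℝ)) := (isLittleO_one_iff ℝ).2 hst
  have hmO : m =O[l] s := by
    refine IsBigO.of_bound 2 (Eventually.of_forall fun a => ?_)
    rw [Real.norm_eq_abs, hnorm_s a]; exact hm a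
  have hqO : q =O[l] (fun a => (s a)^2) := by
    refine IsBigO.of_bound 6 (Eventually.of_forall fun a => ?_)
    rw [Real.norm_eq_abs, Real.norm_eq_abs, abs_of_nonneg (sq_nonneg (s a))]
    exact hq a
  have hxO : x =O[l] s := by
    refine IsBigO.of_bound 52 ?_
    filter_upwards [hx52] with a ha
    rw [Real.norm_eq_abs, hnorm_s a]; exact ha
  have he1O : (fun a => A a - (1 + m a + q a/2)) =O[l] (fun a => (s a)^3) := by
    refine IsBigO.of_bound 8 ?_
    filter_upwards [he1] with a ha
    rw [Real.norm_eq_abs, Real.norm_eq_abs, abs_of_nonneg (pow_nonneg (hs0 a) 3)]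
    exact ha
  have he2O : (fun a => F a - (1 - x a + c*(x a)^2)) =O[l] (fun a => (x a)^3) := by
    refine IsBigO.of_bound B ?_
    filter_upwards [he2] with a ha
    rw [Real.norm_eq_abs, Real.norm_eq_abs, abs_pow]
    exact ha
  have hx3O : (fun a => (x a)^3) =O[l] (fun a => (s a)^3) := hxO.pow 3
  have hs3o : (fun a => (s a)^3) =o[l] (fun a => (s a)^2) := by
    have h := hso.mul_isBigO (isBigO_refl (fun a => (s a)^2) l)
    exact h.congr (fun a => by ring) (fun a => by ring)
  have hs3O2 : (fun a => (s a)^3) =O[l] (fun a => (s a)^2) := hs3o.isBigO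
  have hPO : (fun a => 1 + m a + q a/2) =O[l] (fun _ => (1:ℝ)) := by
    have hmt : Tendsto m l (𝓝 0) := by
      apply squeeze_zero_norm (fun a => hm a)
      simpa using hst.const_mul 2
    have hqt : Tendsto q l (𝓝 0) := by
      apply squeeze_zero_norm (fun a => hq a)
      have := (hst.mul hst).const_mul 6
      simpa [sq] using this
    have h : Tendsto (fun a => 1 + m a + q a/2) l (𝓝 (1 + 0 + 0/2)) :=
      (tendsto_const_nhds.add hmt).add (hqt.div_const 2)
    exact (by simpa using h : Tendsto (fun a => 1 + m a + q a/2) l (𝓝 1)).isBigO_one ℝ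
  have hFO : F =O[l] (fun _ => (1:ℝ)) := by
    have hAinv : Tendsto (fun a => (A a)⁻¹) l (𝓝 1) := by
      have := hAt.inv₀ one_ne_zero
      simpa using this
    have heq : ∀ a, F a = (A a)⁻¹ := fun a =>
      (inv_eq_of_mul_eq_one_right (hAF a)).symm
    exact (hAinv.congr (fun a => (heq a).symm)).isBigO_one ℝ
  -- ξ - m = O(s²)
  have hxm_id : ∀ a, x a - m a
      = q a/2 + (- m a*(x a) + c*(x a)^2 + c*(m a)*(x a)^2
        + (q a/2)*(c*(x a)^2 - x a)
        + (1 + m a + q a/2) * (F a - (1 - x a + c*(x a)^2))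
        + (A a - (1 + m a + q a/2)) * (F a)) := by
    intro a
    linear_combination -(hAF a)
  have hxmO : (fun a => x a - m a) =O[l] (fun a => (s a)^2) := by
    have t2 : (fun a => m a * x a) =O[l] (fun a => (s a)^2) :=
      (hmO.mul hxO).congr (fun a => rfl) (fun a => by ring)
    have t3 : (fun a => (x a)^2) =O[l] (fun a => (s a)^2) := hxO.pow 2
    have t4a : (fun a => m a * (x a)^2) =O[l] (fun a => (s a)^3) :=
      (hmO.mul (hxO.pow 2)).congr (fun a => rfl) (fun a => by ring)
    have t4 : (fun a => m a * (x a)^2) =O[l] (fun a => (s a)^2) := t4a.trans hs3O2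
    have t5 : (fun a => (q a/2)*(c*(x a)^2 - x a)) =O[l] (fun a => (s a)^2) := by
      have hz : Tendsto (fun a => c*(x a)^2 - x a) l (𝓝 0) := by
        have := ((hxt.pow 2).const_mul c).sub hxt
        simpa using this
      have hq2O : (fun a => q a/2) =O[l] (fun a => (s a)^2) :=
        (hqO.const_mul_left (1/2)).congr (fun a => by ring) (fun a => rfl)
      exact ((hq2O.mul (hz.isBigO_one ℝ)).congr (fun a => rfl) (fun a => by ring))
    have t6 : (fun a => (1 + m a + q a/2) * (F a - (1 - x a + c*(x a)^2)))
        =O[l] (fun a => (s a)^2) := by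
      have := hPO.mul ((he2O.trans hx3O).trans hs3O2)
      exact this.congr (fun a => rfl) (fun a => by ring)
    have t7 : (fun a => (A a - (1 + m a + q a/2)) * (F a)) =O[l] (fun a => (s a)^2) := by
      have := (he1O.trans hs3O2).mul hFO
      exact this.congr (fun a => rfl) (fun a => by ring)
    have hsum : (fun a => q a/2 + (- m a*(x a) + c*(x a)^2 + c*(m a)*(x a)^2
        + (q a/2)*(c*(x a)^2 - x a)
        + (1 + m a + q a/2) * (F a - (1 - x a + c*(x a)^2))
        + (A a - (1 + m a + q a/2)) * (F a))) =O[l] (fun a => (s a)^2) := by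
      have hq2O : (fun a => q a/2) =O[l] (fun a => (s a)^2) :=
        (hqO.const_mul_left (1/2)).congr (fun a => by ring) (fun a => rfl)
      refine hq2O.add ?_
      exact (((((t2.neg_left.add (t3.const_mul_left c)).add
        (t4.const_mul_left c)).add t5).add t6).add t7).congr (fun a => by ring)
        (fun a => by ring)
    exact hsum.congr (fun a => (hxm_id a).symm) (fun a => rfl)
  -- main identity and little-o
  have hD_id : ∀ a, x a - m a - q a/2 - (c-1)*(m a)^2
      = (x a - m a)*(c*(x a + m a) - m a) + c*(m a)*(x a)^2
        + (q a/2)*(c*(x a)^2 - x a)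
        + (1 + m a + q a/2) * (F a - (1 - x a + c*(x a)^2))
        + (A a - (1 + m a + q a/2)) * (F a) := by
    intro a
    linear_combination -(hAF a)
  have u1 : (fun a => (x a - m a)*(c*(x a + m a) - m a)) =o[l] (fun a => (s a)^2) := by
    have hb : (fun a => c*(x a + m a) - m a) =O[l] s := by
      have := ((hxO.add hmO).const_mul_left c).sub hmO
      exact this.congr (fun a => rfl) (fun a => by ring)
    exact (hxmO.mul hb).trans_isLittleO (hs3o.congr (fun a => by ring) (fun a => rfl))
  have u2 : (fun a => c*(m a)*(x a)^2) =o[l] (fun a => (s a)^2) := by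
    have := ((hmO.mul (hxO.pow 2)).const_mul_left c).trans_isLittleO
      (hs3o.congr (fun a => by ring) (fun a => rfl))
    exact this.congr (fun a => by ring) (fun a => rfl)
  have u3 : (fun a => (q a/2)*(c*(x a)^2 - x a)) =o[l] (fun a => (s a)^2) := by
    have hz : (fun a => c*(x a)^2 - x a) =o[l] (fun _ => (1:ℝ)) := by
      apply (isLittleO_one_iff ℝ).2
      have := ((hxt.pow 2).const_mul c).sub hxt
      simpa using this
    have hq2O : (fun a => q a/2) =O[l] (fun a => (s a)^2) :=
      (hqO.const_mul_left (1/2)).congr (fun a => by ring) (fun a => rfl)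
    exact (hq2O.mul_isLittleO hz).congr (fun a => rfl) (fun a => by ring)
  have u4 : (fun a => (1 + m a + q a/2) * (F a - (1 - x a + c*(x a)^2)))
      =o[l] (fun a => (s a)^2) := by
    have := hPO.mul_isLittleO ((he2O.trans hx3O).trans_isLittleO hs3o)
    exact this.congr (fun a => rfl) (fun a => by ring)
  have u5 : (fun a => (A a - (1 + m a + q a/2)) * (F a)) =o[l] (fun a => (s a)^2) := by
    have := (he1O.trans_isLittleO hs3o).mul_isBigO hFO
    exact this.congr (fun a => rfl) (fun a => by ring)
  have hsum := (((u1.add u2).add u3).add u4).add u5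
  exact hsum.congr (fun a => (hD_id a).symm) (fun a => rfl)

section MT
variable {Ω : Type*} [MeasurableSpace Ω] (μ : Measure Ω) [IsProbabilityMeasure μ]
  (T : Ω → ℝ) (M : ℝ)

lemma int_of_bdd (f : Ω → ℝ) (C : ℝ) (hf : Measurable f) (hC : ∀ᵐ ω ∂μ, |f ω| ≤ C) :
    Integrable f μ :=
  (integrable_const C).mono' hf.aestronglyMeasurable (by simpa using hC)

lemma int_T (hTmeas : Measurable T) (hTbd : ∀ᵐ ω ∂μ, 0 ≤ T ω ∧ T ω ≤ M) :
    Integrable T μ := by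
  refine int_of_bdd μ T M hTmeas ?_
  filter_upwards [hTbd] with ω ⟨h0, h1⟩ using abs_le.2 ⟨by linarith, h1⟩

lemma int_T2 (hTmeas : Measurable T) (hTbd : ∀ᵐ ω ∂μ, 0 ≤ T ω ∧ T ω ≤ M) :
    Integrable (fun ω => T ω ^ 2) μ := by
  refine int_of_bdd μ _ (M^2) (hTmeas.pow_const 2) ?_
  filter_upwards [hTbd] with ω ⟨h0, h1⟩
  rw [abs_le]
  constructor <;> nlinarith

lemma int_exp (hTmeas : Measurable T) (hTbd : ∀ᵐ ω ∂μ, 0 ≤ T ω ∧ T ω ≤ M) (x : ℝ) :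
    Integrable (fun ω => Real.exp (-x * T ω)) μ := by
  refine int_of_bdd μ _ (Real.exp (|x| * M)) (by measurability) ?_
  filter_upwards [hTbd] with ω ⟨h0, h1⟩
  rw [abs_of_pos (Real.exp_pos _)]
  apply Real.exp_le_exp.2
  have : |x| * T ω ≤ |x| * M := mul_le_mul_of_nonneg_left h1 (abs_nonneg x)
  nlinarith [neg_abs_le x, abs_nonneg x]

lemma phi_taylor (c : ℝ) (hTmeas : Measurable T) (hTbd : ∀ᵐ ω ∂μ, 0 ≤ T ω ∧ T ω ≤ M)
    (hmean : ∫ ω, T ω ∂μ = 1) (hE2 : ∫ ω, T ω ^ 2 ∂μ = 2 * c)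
    (x : ℝ) (hx : |x| * (M+1) ≤ 1) :
    |(∫ ω, Real.exp (-x * T ω) ∂μ) - (1 - x + c*x^2)| ≤ (M+1)^3 * |x|^3 := by
  have hIntT := int_T μ T M hTmeas hTbd
  have hIntT2 := int_T2 μ T M hTmeas hTbd
  have hInt := int_exp μ T M hTmeas hTbd x
  have hi1 : Integrable (fun ω => 1 + -x * T ω) μ :=
    (integrable_const 1).add (hIntT.const_mul (-x))
  have hi2 : Integrable (fun ω => (-x * T ω)^2/2) μ :=
    (hIntT2.const_mul (x^2/2)).congr (by filter_upwards with ω; ring)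
  have hi3 : Integrable (fun ω => 1 + -x * T ω + (-x * T ω)^2/2) μ := hi1.add hi2
  have hpoly : ∫ ω, (1 + -x * T ω + (-x * T ω)^2/2) ∂μ = 1 - x + c * x^2 := by
    rw [integral_add hi1 hi2, integral_add (integrable_const 1) (hIntT.const_mul (-x))]
    have h1 : ∫ ω, (-x * T ω)^2/2 ∂μ = c * x^2 := by
      have he : (fun ω => (-x * T ω)^2/2) = fun ω => (x^2/2) * T ω^2 := by
        funext ω; ring
      rw [he, integral_const_mul, hE2]; ring
    have h2 : ∫ ω, -x * T ω ∂μ = -x := by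
      rw [integral_const_mul, hmean]; ring
    simp only [integral_const, measure_univ, ENNReal.toReal_one, probReal_univ, smul_eq_mul, one_mul, h1, h2]
    ring
  have key : (∫ ω, Real.exp (-x * T ω) ∂μ) - (1 - x + c*x^2)
      = ∫ ω, (Real.exp (-x * T ω) - (1 + -x * T ω + (-x * T ω)^2/2)) ∂μ := by
    rw [integral_sub hInt hi3, hpoly]
  rw [key]
  have hbd : ∀ᵐ ω ∂μ,
      ‖Real.exp (-x * T ω) - (1 + -x * T ω + (-x * T ω)^2/2)‖ ≤ (M+1)^3 * |x|^3 := by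
    filter_upwards [hTbd] with ω ⟨h0, h1⟩
    have h2 : |T ω| ≤ M := abs_le.2 ⟨by linarith, h1⟩
    have hu : |(-x * T ω)| ≤ 1 := by
      rw [abs_mul, abs_neg]
      calc |x| * |T ω| ≤ |x| * (M+1) :=
            mul_le_mul_of_nonneg_left (by linarith) (abs_nonneg x)
        _ ≤ 1 := hx
    calc ‖_‖ ≤ |(-x * T ω)|^3 := exp_cubic_bound hu
      _ ≤ (M+1)^3 * |x|^3 := by
          rw [abs_mul, abs_neg, mul_pow]
          have h3 : |T ω|^3 ≤ (M+1)^3 :=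
            pow_le_pow_left₀ (abs_nonneg _) (by linarith) 3
          nlinarith [pow_nonneg (abs_nonneg x) 3, pow_nonneg (abs_nonneg (T ω)) 3]
  calc |∫ ω, (Real.exp (-x * T ω) - (1 + -x * T ω + (-x * T ω)^2/2)) ∂μ|
      ≤ (M+1)^3 * |x|^3 * (μ Set.univ).toReal := norm_integral_le_of_norm_le_const hbd
    _ = (M+1)^3 * |x|^3 := by simp

lemma phi_anti (hTmeas : Measurable T) (hTbd : ∀ᵐ ω ∂μ, 0 ≤ T ω ∧ T ω ≤ M) :
    Antitone (fun x : ℝ => ∫ ω, Real.exp (-x * T ω) ∂μ) := by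
  intro x y hxy
  apply integral_mono_ae (int_exp μ T M hTmeas hTbd y) (int_exp μ T M hTmeas hTbd x)
  filter_upwards [hTbd] with ω ⟨h0, h1⟩
  apply Real.exp_le_exp.2
  nlinarith

end MT

lemma phi_updown (φ : ℝ → ℝ) (c B M δ : ℝ) (hM : 0 < M) (hc : 1/2 ≤ c) (hB : 1 ≤ B)
    (hδpos : 0 < δ) (hδ1 : δ ≤ 1) (hδM : δ*(M+1) ≤ 1) (hcBδ : (c+B)*δ ≤ 1/2)
    (hφ2 : ∀ x : ℝ, |x| * (M+1) ≤ 1 → |φ x - (1 - x + c*x^2)| ≤ B * |x|^3) :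
    (∀ ε : ℝ, 0 < ε → ε ≤ δ → φ ε ≤ 1 - ε/2) ∧
    (∀ ε : ℝ, 0 < ε → ε ≤ δ → 1 + ε/2 ≤ φ (-ε)) := by
  have hM1 : (0:ℝ) < M + 1 := by nlinarith
  constructor
  · intro ε h1 h2
    have h3 : |ε| * (M+1) ≤ 1 := by
      rw [abs_of_pos h1]
      calc ε * (M+1) ≤ δ * (M+1) := by nlinarith
        _ ≤ 1 := hδM
    have h4 := (abs_le.1 (hφ2 ε h3)).2
    rw [abs_of_pos h1] at h4
    have hε1 : ε ≤ 1 := le_trans h2 hδ1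
    have e2 : ε^2 ≤ δ*ε := by nlinarith
    have e3 : ε^3 ≤ δ*ε := by nlinarith [sq_nonneg ε]
    have b1 : c*ε^2 ≤ c*(δ*ε) := mul_le_mul_of_nonneg_left e2 (by linarith)
    have b2 : B*ε^3 ≤ B*(δ*ε) := mul_le_mul_of_nonneg_left e3 (by linarith)
    have b3 := mul_le_mul_of_nonneg_right hcBδ h1.le
    nlinarith [b1, b2, b3]
  · intro ε h1 h2
    have h3 : |(-ε)| * (M+1) ≤ 1 := by
      rw [abs_neg, abs_of_pos h1]
      calc ε * (M+1) ≤ δ * (M+1) := by nlinarith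
        _ ≤ 1 := hδM
    have h4 := (abs_le.1 (hφ2 (-ε) h3)).1
    rw [abs_neg, abs_of_pos h1] at h4
    have hε1 : ε ≤ 1 := le_trans h2 hδ1
    have e3 : ε^3 ≤ δ*ε := by nlinarith [sq_nonneg ε]
    have b2 : B*ε^3 ≤ B*(δ*ε) := mul_le_mul_of_nonneg_left e3 (by linarith)
    have b3 := mul_le_mul_of_nonneg_right hcBδ h1.le
    nlinarith [b2, b3, sq_nonneg ε, mul_nonneg (by linarith : (0:ℝ) ≤ c) (sq_nonneg ε)]



section Aside
variable {J : ℕ} (i : Fin J) (p0 : ℝ) (p : Fin J → ℝ) (θ : Fin J → ℝ)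

lemma abs_single_le : ∀ k, |θ k| ≤ ∑ j, |θ j| := fun k =>
  Finset.single_le_sum (f := fun j => |θ j|) (fun j _ => abs_nonneg _) (Finset.mem_univ k)

lemma S_bound (hp : ∀ k, 0 ≤ p k) (hp1 : ∀ k, p k ≤ 1) :
    |∑ k, p k * θ k| ≤ ∑ k, |θ k| := by
  calc |∑ k, p k * θ k| ≤ ∑ k, |p k * θ k| := Finset.abs_sum_le_sum_abs _ _
    _ ≤ ∑ k, |θ k| := by
        apply Finset.sum_le_sum
        intro k _
        rw [abs_mul, abs_of_nonneg (hp k)]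
        nlinarith [abs_nonneg (θ k), hp1 k, hp k]

lemma S2_bound (hp : ∀ k, 0 ≤ p k) (hp1 : ∀ k, p k ≤ 1) :
    0 ≤ ∑ k, p k * θ k ^ 2 ∧ (∑ k, p k * θ k ^ 2) ≤ (∑ k, |θ k|)^2 := by
  constructor
  · exact Finset.sum_nonneg fun k _ => mul_nonneg (hp k) (sq_nonneg _)
  · have hstep : ∑ k, p k * θ k ^ 2 ≤ ∑ k, |θ k| * (∑ j, |θ j|) := by
      apply Finset.sum_le_sum
      intro k _
      nlinarith [abs_mul_abs_self (θ k), abs_single_le θ k, abs_nonneg (θ k), hp k, hp1 k,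
        sq_nonneg (θ k)]
    have heq : ∑ k, |θ k| * (∑ j, |θ j|) = (∑ k, |θ k|)^2 := by
      rw [← Finset.sum_mul]; ring
    linarith

lemma m_bound (hp : ∀ k, 0 ≤ p k) (hp1 : ∀ k, p k ≤ 1) :
    |(∑ k, p k * θ k) - θ i| ≤ 2 * ∑ k, |θ k| := by
  calc |(∑ k, p k * θ k) - θ i| ≤ |∑ k, p k * θ k| + |θ i| := abs_sub _ _
    _ ≤ 2 * ∑ k, |θ k| := by
        have := S_bound p θ hp hp1; have := abs_single_le θ i; linarith

lemma q_bound (hp : ∀ k, 0 ≤ p k) (hp1 : ∀ k, p k ≤ 1) :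
    |((∑ k, p k * θ k) - θ i)^2 + (∑ k, p k * θ k ^ 2) - (∑ k, p k * θ k)^2|
      ≤ 6 * (∑ k, |θ k|)^2 := by
  have h1 : ((∑ k, p k * θ k) - θ i)^2 ≤ (2 * ∑ k, |θ k|)^2 := by
    rw [← sq_abs]; exact pow_le_pow_left₀ (abs_nonneg _) (m_bound i p θ hp hp1) 2
  have h2 : (∑ k, p k * θ k)^2 ≤ (∑ k, |θ k|)^2 := by
    rw [← sq_abs]; exact pow_le_pow_left₀ (abs_nonneg _) (S_bound p θ hp hp1) 2
  have h3 := S2_bound p θ hp hp1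
  have h4 : (0:ℝ) ≤ ∑ k, |θ k| := Finset.sum_nonneg fun k _ => abs_nonneg _
  rw [abs_le]
  constructor <;>
    nlinarith [sq_nonneg ((∑ k, p k * θ k) - θ i), sq_nonneg (∑ k, p k * θ k)]

lemma A_taylor (hp0 : 0 ≤ p0) (hp : ∀ k, 0 ≤ p k) (hpsum : p0 + ∑ k, p k = 1)
    (hs : (∑ k, |θ k|) ≤ 1/2) :
    |(p0 * Real.exp (-θ i) + ∑ k, p k * Real.exp (θ k - θ i))
      - (1 + ((∑ k, p k * θ k) - θ i)
        + (((∑ k, p k * θ k) - θ i)^2 + (∑ k, p k * θ k ^ 2) - (∑ k, p k * θ k)^2)/2)|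
      ≤ 8 * (∑ k, |θ k|)^3 := by
  have hPid : 1 + ((∑ k, p k * θ k) - θ i)
      + (((∑ k, p k * θ k) - θ i)^2 + (∑ k, p k * θ k ^ 2) - (∑ k, p k * θ k)^2)/2
      = p0 * (1 + -θ i + (-θ i)^2/2) + ∑ k, p k * (1 + (θ k - θ i) + (θ k - θ i)^2/2) := by
    have he : ∀ k, p k * (1 + (θ k - θ i) + (θ k - θ i)^2/2)
        = p k + (p k * θ k - (θ i) * (p k)) +
          ((p k * θ k^2)/2 - (θ i)*(p k * θ k) + ((θ i^2)/2) * (p k)) := by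
      intro k; ring
    rw [Finset.sum_congr rfl (fun k _ => he k)]
    simp only [Finset.sum_add_distrib, Finset.sum_sub_distrib, ← Finset.mul_sum,
      ← Finset.sum_div]
    have hsum : ∑ k, p k = 1 - p0 := by linarith
    rw [hsum]
    ring
  rw [hPid]
  have hsplit : ∑ k, p k * (Real.exp (θ k - θ i) - (1 + (θ k - θ i) + (θ k - θ i)^2/2))
      = ∑ k, p k * Real.exp (θ k - θ i)
        - ∑ k, p k * (1 + (θ k - θ i) + (θ k - θ i)^2/2) := by
    rw [← Finset.sum_sub_distrib]
    apply Finset.sum_congr rfl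
    intro k _; ring
  have hkey : p0 * Real.exp (-θ i) + ∑ k, p k * Real.exp (θ k - θ i)
      - (p0 * (1 + -θ i + (-θ i)^2/2) + ∑ k, p k * (1 + (θ k - θ i) + (θ k - θ i)^2/2))
      = p0 * (Real.exp (-θ i) - (1 + -θ i + (-θ i)^2/2))
        + ∑ k, p k * (Real.exp (θ k - θ i) - (1 + (θ k - θ i) + (θ k - θ i)^2/2)) := by
    rw [hsplit]; ring
  rw [hkey]
  have hs_nonneg : (0:ℝ) ≤ ∑ k, |θ k| := Finset.sum_nonneg fun k _ => abs_nonneg _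
  have hti : |θ i| ≤ ∑ k, |θ k| := abs_single_le θ i
  have h0 : |p0 * (Real.exp (-θ i) - (1 + -θ i + (-θ i)^2/2))| ≤ p0 * (∑ k, |θ k|)^3 := by
    rw [abs_mul, abs_of_nonneg hp0]
    apply mul_le_mul_of_nonneg_left _ hp0
    calc |Real.exp (-θ i) - (1 + -θ i + (-θ i)^2/2)| ≤ |(-θ i)|^3 :=
          exp_cubic_bound (by rw [abs_neg]; linarith)
      _ ≤ (∑ k, |θ k|)^3 := by rw [abs_neg]; exact pow_le_pow_left₀ (abs_nonneg _) hti 3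
  have hsumb : |∑ k, p k * (Real.exp (θ k - θ i) - (1 + (θ k - θ i) + (θ k - θ i)^2/2))|
      ≤ ∑ k, p k * (8 * (∑ j, |θ j|)^3) := by
    refine le_trans (Finset.abs_sum_le_sum_abs _ _) (Finset.sum_le_sum ?_)
    intro k _
    rw [abs_mul, abs_of_nonneg (hp k)]
    apply mul_le_mul_of_nonneg_left _ (hp k)
    have hu : |θ k - θ i| ≤ 2 * ∑ j, |θ j| := by
      calc |θ k - θ i| ≤ |θ k| + |θ i| := abs_sub _ _
        _ ≤ 2 * ∑ j, |θ j| := by have := abs_single_le θ k; linarith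
    calc |Real.exp (θ k - θ i) - (1 + (θ k - θ i) + (θ k - θ i)^2/2)| ≤ |θ k - θ i|^3 :=
          exp_cubic_bound (by linarith)
      _ ≤ (2 * ∑ j, |θ j|)^3 := pow_le_pow_left₀ (abs_nonneg _) hu 3
      _ = 8 * (∑ j, |θ j|)^3 := by ring
  calc |p0 * (Real.exp (-θ i) - (1 + -θ i + (-θ i)^2/2))
        + ∑ k, p k * (Real.exp (θ k - θ i) - (1 + (θ k - θ i) + (θ k - θ i)^2/2))|
      ≤ |p0 * (Real.exp (-θ i) - (1 + -θ i + (-θ i)^2/2))|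
        + |∑ k, p k * (Real.exp (θ k - θ i) - (1 + (θ k - θ i) + (θ k - θ i)^2/2))| :=
        abs_add_le _ _
    _ ≤ p0 * (∑ k, |θ k|)^3 + ∑ k, p k * (8 * (∑ j, |θ j|)^3) := add_le_add h0 hsumb
    _ = (p0 + ∑ k, p k) * (8 * (∑ k, |θ k|)^3) - p0 * (7 * (∑ k, |θ k|)^3) := by
        rw [← Finset.sum_mul]; ring
    _ ≤ 8 * (∑ k, |θ k|)^3 := by
        rw [hpsum]
        nlinarith [mul_nonneg hp0 (pow_nonneg hs_nonneg 3)]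

end Aside


open Asymptotics in
/-- Second-order expansion of the implicitly defined `ξ(θ)` solving
`(p_0 e^{-θ_i} + ∑_k p_k e^{θ_k-θ_i}) 𝔼[e^{-ξ(θ)T}] = 1` for bounded `T` with mean 1
and variance `c_s²`:  `ξ(θ) → 0` and `(ξ(θ) - ξ̄(θ) - (1/2)ξ*(θ))/|θ|² → 0` as `θ → 0`. -/
theorem stmt6 {Ω : Type*} [MeasurableSpace Ω] (μ : Measure Ω) [IsProbabilityMeasure μ]
    (J : ℕ) (hJ : 0 < J) (i : Fin J) (p0 : ℝ) (p : Fin J → ℝ)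
    (hp0 : 0 ≤ p0) (hp : ∀ k, 0 ≤ p k) (hpsum : p0 + ∑ k, p k = 1)
    (T : Ω → ℝ) (hTmeas : Measurable T) (M cs : ℝ) (hM : 0 < M)
    (hT0 : ∀ᵐ ω ∂μ, 0 ≤ T ω) (hTM : ∀ᵐ ω ∂μ, T ω ≤ M)
    (hTpos : μ {ω | 0 < T ω} = 1)
    (hmean : ∫ ω, T ω ∂μ = 1)
    (hvar : ProbabilityTheory.variance T μ = cs ^ 2)
    (ξ : (Fin J → ℝ) → ℝ)
    (hξ : ∀ θ : Fin J → ℝ,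
      (p0 * Real.exp (-θ i) + ∑ k, p k * Real.exp (θ k - θ i)) *
        ∫ ω, Real.exp (-(ξ θ) * T ω) ∂μ = 1) :
    Tendsto ξ (𝓝 0) (𝓝 0) ∧
    Tendsto (fun θ : Fin J → ℝ =>
        (ξ θ - ((∑ k, p k * θ k) - θ i) -
            (1 / 2) * (cs ^ 2 * ((∑ k, p k * θ k) - θ i) ^ 2 +
              (∑ k, p k * θ k ^ 2) - (∑ k, p k * θ k) ^ 2)) /
          (∑ k, |θ k|) ^ 2)
      (𝓝[≠] 0) (𝓝 0) := by
  have hTbd : ∀ᵐ ω ∂μ, 0 ≤ T ω ∧ T ω ≤ M := hT0.and hTM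
  have hcs2 : 0 ≤ cs ^ 2 := hvar ▸ ProbabilityTheory.variance_nonneg T μ
  set c : ℝ := (1 + cs^2)/2 with hcdef
  set B : ℝ := (M+1)^3 with hBdef
  have hc : (1:ℝ)/2 ≤ c := by rw [hcdef]; linarith
  have hB1 : 1 ≤ B := by rw [hBdef]; exact one_le_pow₀ (by linarith)
  have hET2 : ∫ ω, T ω ^ 2 ∂μ = 2 * c := by
    have hmem : MemLp T 2 μ := by
      refine MemLp.mono_exponent (q := ⊤) ?_ le_top
      refine memLp_top_of_bound hTmeas.aestronglyMeasurable M ?_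
      filter_upwards [hTbd] with ω ⟨h0, h1⟩
      simpa [abs_le] using ⟨by linarith, h1⟩
    have h := ProbabilityTheory.variance_eq_sub hmem
    rw [hvar, hmean] at h
    have h2 : (∫ ω, (T ^ 2) ω ∂μ) = ∫ ω, T ω ^ 2 ∂μ := rfl
    rw [h2] at h
    rw [hcdef]
    linarith
  set φ : ℝ → ℝ := fun x => ∫ ω, Real.exp (-x * T ω) ∂μ with hφdef
  have hφ2 : ∀ x : ℝ, |x| * (M+1) ≤ 1 → |φ x - (1 - x + c*x^2)| ≤ B * |x|^3 := by
    intro x hx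
    rw [hφdef, hBdef]
    exact phi_taylor μ T M c hTmeas hTbd hmean hET2 x hx
  have hφanti : Antitone φ := phi_anti μ T M hTmeas hTbd
  have hp1 : ∀ k, p k ≤ 1 := by
    intro k
    have : p k ≤ ∑ j, p j := Finset.single_le_sum (fun j _ => hp j) (Finset.mem_univ k)
    linarith
  set A : (Fin J → ℝ) → ℝ :=
    fun θ => p0 * Real.exp (-θ i) + ∑ k, p k * Real.exp (θ k - θ i) with hAdef
  have hAφ : ∀ θ, A θ * φ (ξ θ) = 1 := fun θ => hξ θ
  have hApos : ∀ θ, 0 < A θ := by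
    intro θ
    have h0le : 0 ≤ A θ := by
      refine add_nonneg (mul_nonneg hp0 (Real.exp_pos _).le) ?_
      exact Finset.sum_nonneg fun k _ => mul_nonneg (hp k) (Real.exp_pos _).le
    rcases h0le.eq_or_lt with h | h
    · exfalso
      have h1 := hAφ θ
      rw [← h, zero_mul] at h1
      norm_num at h1
    · exact h
  have hAcont : Tendsto A (𝓝 0) (𝓝 1) := by
    have hco : Continuous A := by rw [hAdef]; fun_prop
    have hA0 : A 0 = 1 := by rw [hAdef]; simpa using hpsum
    simpa [hA0] using hco.tendsto 0
  set δ : ℝ := min (1/(M+1)) (1/(2*(c+B))) with hδdef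
  have hMpos : (0:ℝ) < M + 1 := by linarith
  have hcBpos : (0:ℝ) < 2*(c+B) := by linarith
  have hδpos : 0 < δ := lt_min (by positivity) (by positivity)
  have hδ1 : δ ≤ 1 := le_trans (min_le_left _ _) (by rw [div_le_one hMpos]; linarith)
  have hδM : δ * (M+1) ≤ 1 := by
    have h := min_le_left (1/(M+1)) (1/(2*(c+B)))
    rw [← le_div_iff₀ hMpos]
    exact h
  have hcBδ : (c+B) * δ ≤ 1/2 := by
    have h1 : δ ≤ 1/(2*(c+B)) := min_le_right _ _
    rw [le_div_iff₀ hcBpos] at h1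
    linarith
  obtain ⟨hφup, hφdn⟩ := phi_updown φ c B M δ hM hc hB1 hδpos hδ1 hδM hcBδ hφ2
  have part1 : Tendsto ξ (𝓝 0) (𝓝 0) :=
    tendsto_xi_zero φ A ξ δ hδpos hφanti hφup hφdn hApos hAφ hAcont
  refine ⟨part1, ?_⟩
  set l : Filter (Fin J → ℝ) := 𝓝[≠] 0 with hldef
  have hl : l ≤ 𝓝 0 := nhdsWithin_le_nhds
  set s : (Fin J → ℝ) → ℝ := fun θ => ∑ k, |θ k| with hsdef
  set m : (Fin J → ℝ) → ℝ := fun θ => (∑ k, p k * θ k) - θ i with hmdef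
  set q : (Fin J → ℝ) → ℝ :=
    fun θ => (m θ)^2 + (∑ k, p k * θ k ^ 2) - (∑ k, p k * θ k)^2 with hqdef
  have hs0 : ∀ θ, 0 ≤ s θ := fun θ => Finset.sum_nonneg (fun k _ => abs_nonneg _)
  have hm_all : ∀ θ, |m θ| ≤ 2 * s θ := fun θ => m_bound i p θ hp hp1
  have hq_all : ∀ θ, |q θ| ≤ 6 * (s θ)^2 := fun θ => q_bound i p θ hp hp1
  have hscont : Tendsto s (𝓝 0) (𝓝 0) := by
    have hco : Continuous s := by rw [hsdef]; fun_prop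
    have h0 : s 0 = 0 := by rw [hsdef]; simp
    simpa [h0] using hco.tendsto 0
  have hev_s12 : ∀ᶠ θ in 𝓝 (0 : Fin J → ℝ), s θ < 1/2 := by
    have h := Metric.tendsto_nhds.1 hscont (1/2) (by norm_num)
    filter_upwards [h] with θ hθ
    rw [Real.dist_eq, sub_zero] at hθ
    exact lt_of_le_of_lt (le_abs_self _) hθ
  have he1 : ∀ᶠ θ in l, |A θ - (1 + m θ + q θ/2)| ≤ 8 * (s θ)^3 := by
    filter_upwards [hl hev_s12] with θ hθ
    exact A_taylor i p0 p θ hp0 hp hpsum hθ.le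
  have hev_ξδ : ∀ᶠ θ in 𝓝 (0 : Fin J → ℝ), |ξ θ| < δ := by
    have h := Metric.tendsto_nhds.1 part1 δ hδpos
    simpa [Real.dist_eq] using h
  have he2 : ∀ᶠ θ in l, |φ (ξ θ) - (1 - ξ θ + c*(ξ θ)^2)| ≤ B * |ξ θ|^3 := by
    filter_upwards [hl hev_ξδ] with θ hθ
    have hxM : |ξ θ| * (M+1) ≤ 1 := by
      calc |ξ θ| * (M+1) ≤ δ * (M+1) := by nlinarith [abs_nonneg (ξ θ)]
        _ ≤ 1 := hδM
    exact hφ2 (ξ θ) hxM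
  have hst : Tendsto s l (𝓝 0) := hscont.mono_left hl
  have hxt : Tendsto ξ l (𝓝 0) := part1.mono_left hl
  have hAt : Tendsto A l (𝓝 1) := hAcont.mono_left hl
  have hDo := master_littleO c B hc hB1 s m q ξ (fun θ => φ (ξ θ)) A
    hs0 hm_all hq_all hAφ he1 he2 hst hxt hAt
  have hfinal := hDo.tendsto_div_nhds_zero
  refine hfinal.congr (fun θ => ?_)
  have em : m θ = (∑ k, p k * θ k) - θ i := rfl
  have eq' : q θ = (m θ)^2 + (∑ k, p k * θ k ^ 2) - (∑ k, p k * θ k)^2 := rfl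
  have es : s θ = ∑ k, |θ k| := rfl
  rw [eq', em, es, hcdef]
  ring
end

section
/- Let j be a positive integer, ℓ a nonnegative integer with ℓ < j, ε₀ > 0 and λ > 0. For each r ∈ (0,1), let Z^{(r)} be a nonnegative random variable and A_r a measurable event on a probability space (possibly depending on r), and let μ^{(r)} > 0 be reals such that ℙ(A_r) = r^j / μ^{(r)} for all r, μ^{(r)} → λ as r → 0⁺, and sup_{r ∈ (0,1)} 𝔼[(r^{ℓ} Z^{(r)})^{j+ε₀}] < ∞. Then r^{ℓ+1} 𝔼[Z^{(r)} · 1_{A_r}] / ℙ(A_r) → 0 as r → 0⁺. -/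
open MeasureTheory Filter Topology

/-- Conditional-expectation state-space-collapse bound: if `ℙ(A_r) = r^j/μ^{(r)}` with
`μ^{(r)} → λ > 0`, and the `(j+ε₀)`-th moments of `r^ℓ Z^{(r)}` are uniformly bounded
(`ℓ < j`), then `r^{ℓ+1} 𝔼[Z^{(r)} 1_{A_r}]/ℙ(A_r) → 0` as `r → 0⁺`. -/
theorem stmt11 (j l : ℕ) (hj : 0 < j) (hl : l < j)
    (ε₀ lam : ℝ) (hε₀ : 0 < ε₀) (hlam : 0 < lam)
    {Ω : ℝ → Type*} [∀ r, MeasurableSpace (Ω r)]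
    (μ : ∀ r : ℝ, Measure (Ω r)) (hprob : ∀ r, IsProbabilityMeasure (μ r))
    (Z : ∀ r : ℝ, Ω r → ℝ) (hZmeas : ∀ r, Measurable (Z r)) (hZ0 : ∀ r ω, 0 ≤ Z r ω)
    (A : ∀ r : ℝ, Set (Ω r)) (hA : ∀ r, MeasurableSet (A r))
    (m : ℝ → ℝ) (hm : ∀ r ∈ Set.Ioo (0 : ℝ) 1, 0 < m r)
    (hPA : ∀ r ∈ Set.Ioo (0 : ℝ) 1, μ r (A r) = ENNReal.ofReal (r ^ j / m r))
    (hmlim : Tendsto m (𝓝[>] 0) (𝓝 lam))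
    (hint : ∀ r ∈ Set.Ioo (0 : ℝ) 1,
      Integrable (fun ω => (r ^ l * Z r ω) ^ ((j : ℝ) + ε₀)) (μ r))
    (C : ℝ)
    (hsup : ∀ r ∈ Set.Ioo (0 : ℝ) 1,
      ∫ ω, (r ^ l * Z r ω) ^ ((j : ℝ) + ε₀) ∂(μ r) ≤ C) :
    Tendsto (fun r : ℝ => r ^ (l + 1) * (∫ ω in A r, Z r ω ∂(μ r)) / (μ r (A r)).toReal)
      (𝓝[>] 0) (𝓝 0) := by
  set p : ℝ := (j : ℝ) + ε₀ with hp_def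
  have hj1 : (1 : ℝ) ≤ (j : ℝ) := by exact_mod_cast hj
  have hp1 : 1 < p := by simp only [hp_def]; linarith
  have hpm1 : 0 < p - 1 := by linarith
  set α : ℝ := (((j : ℝ) - 1) / (p - 1) + 1) / 2 with hα_def
  have hjp : ((j : ℝ) - 1) / (p - 1) < 1 := by
    rw [div_lt_one hpm1]; simp only [hp_def]; linarith
  have hα1 : α < 1 := by simp only [hα_def]; linarith
  have hαgt : ((j : ℝ) - 1) / (p - 1) < α := by simp only [hα_def]; linarith
  set β : ℝ := 1 + α * (p - 1) - (j : ℝ) with hβ_def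
  have hβ : 0 < β := by
    have h := (div_lt_iff₀ hpm1).mp hαgt
    simp only [hβ_def]; linarith
  have hC : 0 ≤ C := by
    refine le_trans ?_ (hsup (1/2) ⟨by norm_num, by norm_num⟩)
    exact integral_nonneg fun ω =>
      Real.rpow_nonneg (mul_nonneg (by positivity) (hZ0 _ ω)) _
  -- the key pointwise-in-r bound
  have key : ∀ r ∈ Set.Ioo (0 : ℝ) 1,
      r ^ (l + 1) * (∫ ω in A r, Z r ω ∂(μ r)) / (μ r (A r)).toReal
        ≤ r ^ (1 - α) + C * m r * r ^ β := by
    intro r hr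
    obtain ⟨hr0, hr1⟩ := hr
    haveI := hprob r
    have hrl : (0 : ℝ) < r ^ l := pow_pos hr0 l
    set t : ℝ := r ^ (-(l : ℝ) - α) with ht_def
    have ht : 0 < t := Real.rpow_pos_of_pos hr0 _
    have ht1p : 0 ≤ t ^ (1 - p) := Real.rpow_nonneg ht.le _
    have hptw : ∀ ω, Z r ω ≤ t + Z r ω ^ p * t ^ (1 - p) := by
      intro ω
      have hz := hZ0 r ω
      rcases le_or_gt (Z r ω) t with h | h
      · have h0 : 0 ≤ Z r ω ^ p * t ^ (1 - p) :=
          mul_nonneg (Real.rpow_nonneg hz _) ht1p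
        linarith
      · have hz0 : 0 < Z r ω := lt_trans ht h
        have h1 : t ^ (p - 1) ≤ Z r ω ^ (p - 1) :=
          Real.rpow_le_rpow ht.le h.le (by linarith)
        have h2 : (1 : ℝ) ≤ Z r ω ^ (p - 1) * t ^ (1 - p) := by
          have ht1 : t ^ (p - 1) * t ^ (1 - p) = 1 := by
            rw [← Real.rpow_add ht]; norm_num
          calc (1 : ℝ) = t ^ (p - 1) * t ^ (1 - p) := ht1.symm
            _ ≤ Z r ω ^ (p - 1) * t ^ (1 - p) :=
                mul_le_mul_of_nonneg_right h1 ht1p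
        have h3 : Z r ω ^ p = Z r ω * Z r ω ^ (p - 1) := by
          rw [show p = 1 + (p - 1) by ring, Real.rpow_add hz0, Real.rpow_one]
          ring_nf
        calc Z r ω = Z r ω * 1 := (mul_one _).symm
          _ ≤ Z r ω * (Z r ω ^ (p - 1) * t ^ (1 - p)) :=
              mul_le_mul_of_nonneg_left h2 hz0.le
          _ = Z r ω ^ p * t ^ (1 - p) := by rw [h3]; ring
          _ ≤ t + Z r ω ^ p * t ^ (1 - p) := le_add_of_nonneg_left ht.le
    have hZp_eq : ∀ ω, (r ^ l * Z r ω) ^ p = (r ^ l) ^ p * Z r ω ^ p := fun ω =>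
      Real.mul_rpow hrl.le (hZ0 r ω)
    have hne : ((r : ℝ) ^ l) ^ p ≠ 0 := (Real.rpow_pos_of_pos hrl p).ne'
    have hZp_int : Integrable (fun ω => Z r ω ^ p) (μ r) := by
      have h := (hint r ⟨hr0, hr1⟩).const_mul (((r : ℝ) ^ l) ^ p)⁻¹
      refine h.congr (Filter.Eventually.of_forall fun ω => ?_)
      show (((r : ℝ) ^ l) ^ p)⁻¹ * (r ^ l * Z r ω) ^ p = Z r ω ^ p
      rw [hZp_eq ω, inv_mul_cancel_left₀ hne]
    have hIeq : ∫ ω, (r ^ l * Z r ω) ^ p ∂(μ r)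
        = (r ^ l) ^ p * ∫ ω, Z r ω ^ p ∂(μ r) := by
      rw [← integral_const_mul]
      exact integral_congr_ae (Filter.Eventually.of_forall fun ω => hZp_eq ω)
    have hrlp : ((r : ℝ) ^ l) ^ p = r ^ ((l : ℝ) * p) := by
      rw [Real.rpow_mul hr0.le, Real.rpow_natCast]
    have hrp : 0 < r ^ ((l : ℝ) * p) := Real.rpow_pos_of_pos hr0 _
    have hI : ∫ ω, Z r ω ^ p ∂(μ r) ≤ C * r ^ (-((l : ℝ) * p)) := by
      have h1 := hsup r ⟨hr0, hr1⟩
      rw [hIeq, hrlp] at h1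
      rw [Real.rpow_neg hr0.le, mul_comm C, ← div_eq_inv_mul, le_div_iff₀ hrp, mul_comm]
      exact h1
    have hg_int : Integrable (fun ω => t + Z r ω ^ p * t ^ (1 - p)) (μ r) :=
      (integrable_const t).add (hZp_int.mul_const _)
    have hZ_int : Integrable (Z r) (μ r) :=
      hg_int.mono' (hZmeas r).aestronglyMeasurable
        (Filter.Eventually.of_forall fun ω => by
          rw [Real.norm_eq_abs, abs_of_nonneg (hZ0 r ω)]; exact hptw ω)
    have hm0 : 0 < m r := hm r ⟨hr0, hr1⟩
    have hPAr : (μ r (A r)).toReal = r ^ j / m r := by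
      rw [hPA r ⟨hr0, hr1⟩, ENNReal.toReal_ofReal (by positivity)]
    have hPApos : 0 < (μ r (A r)).toReal := by rw [hPAr]; positivity
    have hS : (∫ ω in A r, Z r ω ∂(μ r))
        ≤ t * (μ r (A r)).toReal + (∫ ω, Z r ω ^ p ∂(μ r)) * t ^ (1 - p) := by
      have h1 : (∫ ω in A r, Z r ω ∂(μ r))
          ≤ ∫ ω in A r, (t + Z r ω ^ p * t ^ (1 - p)) ∂(μ r) :=
        setIntegral_mono_on hZ_int.integrableOn hg_int.integrableOn (hA r)
          (fun ω _ => hptw ω)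
      have h2 : ∫ ω in A r, (t + Z r ω ^ p * t ^ (1 - p)) ∂(μ r)
          = t * (μ r (A r)).toReal + (∫ ω in A r, Z r ω ^ p ∂(μ r)) * t ^ (1 - p) := by
        rw [integral_add (integrableOn_const (C := t) (measure_ne_top _ _))
            ((hZp_int.mul_const _).integrableOn), setIntegral_const,
            integral_mul_const, smul_eq_mul, measureReal_def]
        ring
      have h3 : (∫ ω in A r, Z r ω ^ p ∂(μ r)) ≤ ∫ ω, Z r ω ^ p ∂(μ r) :=
        setIntegral_le_integral hZp_int
          (Filter.Eventually.of_forall fun ω => Real.rpow_nonneg (hZ0 r ω) _)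
      have h4 := mul_le_mul_of_nonneg_right h3 ht1p
      linarith
    have e1 : (r : ℝ) ^ (l + 1) * r ^ (-(l : ℝ) - α) = r ^ (1 - α) := by
      rw [← Real.rpow_natCast r (l + 1), ← Real.rpow_add hr0]
      congr 1; push_cast; ring
    have eβ : (r : ℝ) ^ β
        = r ^ ((l : ℝ) + 1) * r ^ ((-(l : ℝ) - α) * (1 - p))
          * (r ^ (-((l : ℝ) * p)) * r ^ (-(j : ℝ))) := by
      rw [← Real.rpow_add hr0, ← Real.rpow_add hr0, ← Real.rpow_add hr0]
      congr 1
      simp only [hβ_def]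
      ring
    have e2 : (r : ℝ) ^ (l + 1) * (r ^ (-(l : ℝ) - α)) ^ (1 - p)
          * (C * r ^ (-((l : ℝ) * p))) / (r ^ j / m r)
        = C * m r * r ^ β := by
      have hrj : (0 : ℝ) < r ^ ((j : ℝ)) := Real.rpow_pos_of_pos hr0 _
      rw [eβ, ← Real.rpow_natCast r (l + 1), ← Real.rpow_natCast r j,
        ← Real.rpow_mul hr0.le, Real.rpow_neg hr0.le (j : ℝ)]
      push_cast
      field_simp
    calc r ^ (l + 1) * (∫ ω in A r, Z r ω ∂(μ r)) / (μ r (A r)).toReal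
        ≤ r ^ (l + 1) * (t * (μ r (A r)).toReal
            + (∫ ω, Z r ω ^ p ∂(μ r)) * t ^ (1 - p)) / (μ r (A r)).toReal := by
          gcongr
      _ = r ^ (l + 1) * t + r ^ (l + 1) * t ^ (1 - p)
            * (∫ ω, Z r ω ^ p ∂(μ r)) / (μ r (A r)).toReal := by
          field_simp
      _ ≤ r ^ (l + 1) * t + r ^ (l + 1) * t ^ (1 - p)
            * (C * r ^ (-((l : ℝ) * p))) / (μ r (A r)).toReal := by
          gcongr
      _ = r ^ (1 - α) + C * m r * r ^ β := by
          rw [hPAr, ht_def, e1, e2]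
  -- limits of the bounding function
  have hrpow_lim : ∀ e : ℝ, 0 < e →
      Tendsto (fun r : ℝ => r ^ e) (𝓝[>] (0 : ℝ)) (𝓝 0) := by
    intro e he
    have h := (Real.continuousAt_rpow_const 0 e (Or.inr he.le)).tendsto
    rw [Real.zero_rpow he.ne'] at h
    exact h.mono_left nhdsWithin_le_nhds
  have hg0 : Tendsto (fun r : ℝ => r ^ (1 - α) + C * m r * r ^ β) (𝓝[>] (0 : ℝ)) (𝓝 0) := by
    have h1 := hrpow_lim (1 - α) (by linarith)
    have h2 : Tendsto (fun r : ℝ => C * m r * r ^ β) (𝓝[>] (0 : ℝ)) (𝓝 (C * lam * 0)) :=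
      (tendsto_const_nhds.mul hmlim).mul (hrpow_lim β hβ)
    rw [mul_zero] at h2
    simpa using h1.add h2
  refine tendsto_of_tendsto_of_tendsto_of_le_of_le' tendsto_const_nhds hg0 ?_ ?_
  · filter_upwards [self_mem_nhdsWithin] with r hr
    have hr0 : (0 : ℝ) < r := hr
    exact div_nonneg (mul_nonneg (pow_nonneg hr0.le _)
      (setIntegral_nonneg (hA r) fun ω _ => hZ0 r ω)) ENNReal.toReal_nonneg
  · filter_upwards [Ioo_mem_nhdsGT_of_mem (by norm_num : (0 : ℝ) ∈ Set.Ico 0 1)] with r hr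
    exact key r hr
end

section
/- Let J be a positive integer. For each r ∈ (0,1), let Z^{(r)} = (Z_1^{(r)},…,Z_J^{(r)}) be a random vector with nonnegative coordinates on a probability space, and suppose sup_{r ∈ (0,1)} 𝔼[r^{k} Z_k^{(r)}] < ∞ for each k = 1,…,J. Let θ, θ′ : (0,1) → ℝ^J be functions with θ_k(r) ≤ 0 and θ′_k(r) ≤ 0 for all k and r, and with (θ_k(r) − θ′_k(r)) / r^{k} → 0 as r → 0⁺ for each k. Then 𝔼[exp(Σ_{k=1}^J θ_k(r) Z_k^{(r)})] − 𝔼[exp(Σ_{k=1}^J θ′_k(r) Z_k^{(r)})] → 0 as r → 0⁺. -/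
open MeasureTheory Filter Topology Finset

lemma exp_lip_aux {a b : ℝ} (ha : a ≤ 0) (hb : b ≤ 0) :
    |Real.exp a - Real.exp b| ≤ |a - b| := by
  wlog h : b ≤ a generalizing a b
  · rw [abs_sub_comm, abs_sub_comm a b]; exact this hb ha (le_of_not_ge h)
  rw [abs_of_nonneg (sub_nonneg.2 (Real.exp_le_exp.2 h)), abs_of_nonneg (sub_nonneg.2 h)]
  have h1 : 1 + (b - a) ≤ Real.exp (b - a) := by linarith [Real.add_one_le_exp (b - a)]
  have h2 : Real.exp a * Real.exp (b - a) = Real.exp b := by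
    rw [← Real.exp_add]; ring_nf
  have h3 : Real.exp a ≤ 1 := Real.exp_le_one_iff.2 ha
  nlinarith [Real.exp_pos a]

/-- If the first moments of `r^k Z_k^{(r)}` are uniformly bounded and the nonpositive
exponent vectors `θ(r), θ'(r)` satisfy `(θ_k(r) - θ'_k(r))/r^k → 0` for each `k`, then
`𝔼[exp⟨θ(r), Z^{(r)}⟩] - 𝔼[exp⟨θ'(r), Z^{(r)}⟩] → 0` as `r → 0⁺`.
(Station `k ∈ {1,…,J}` corresponds to `k : Fin J` with exponent `k+1`.) -/
theorem stmt12 (J : ℕ) (hJ : 0 < J)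
    {Ω : ℝ → Type*} [∀ r, MeasurableSpace (Ω r)]
    (μ : ∀ r : ℝ, Measure (Ω r)) (hprob : ∀ r, IsProbabilityMeasure (μ r))
    (Z : ∀ r : ℝ, Ω r → Fin J → ℝ) (hZmeas : ∀ r, Measurable (Z r))
    (hZ0 : ∀ r ω k, 0 ≤ Z r ω k)
    (hint : ∀ (k : Fin J), ∀ r ∈ Set.Ioo (0 : ℝ) 1,
      Integrable (fun ω => r ^ ((k : ℕ) + 1) * Z r ω k) (μ r))
    (C : Fin J → ℝ)
    (hsup : ∀ (k : Fin J), ∀ r ∈ Set.Ioo (0 : ℝ) 1,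
      ∫ ω, r ^ ((k : ℕ) + 1) * Z r ω k ∂(μ r) ≤ C k)
    (θ θ' : ℝ → Fin J → ℝ)
    (hθ : ∀ r k, θ r k ≤ 0) (hθ' : ∀ r k, θ' r k ≤ 0)
    (hdiff : ∀ k : Fin J,
      Tendsto (fun r : ℝ => (θ r k - θ' r k) / r ^ ((k : ℕ) + 1)) (𝓝[>] 0) (𝓝 0)) :
    Tendsto (fun r : ℝ =>
        (∫ ω, Real.exp (∑ k, θ r k * Z r ω k) ∂(μ r)) -
          ∫ ω, Real.exp (∑ k, θ' r k * Z r ω k) ∂(μ r))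
      (𝓝[>] 0) (𝓝 0) := by
  set C' : Fin J → ℝ := fun k => max (C k) 0 with hC'
  -- the dominating function
  set ε : ℝ → ℝ := fun r => ∑ k, |(θ r k - θ' r k) / r ^ ((k : ℕ) + 1)| * C' k with hε
  have hεlim : Tendsto ε (𝓝[>] 0) (𝓝 0) := by
    have : Tendsto ε (𝓝[>] 0) (𝓝 (∑ k : Fin J, |(0:ℝ)| * C' k)) := by
      apply tendsto_finset_sum
      intro k _
      exact ((hdiff k).abs).mul_const _
    simpa using this
  apply squeeze_zero_norm' _ hεlim
  filter_upwards [Ioo_mem_nhdsGT_of_mem (by norm_num : (0:ℝ) ∈ Set.Ico (0:ℝ) 1)] with r hr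
  obtain ⟨hr0, hr1⟩ := hr
  haveI := hprob r
  -- measurability and integrability of the exponentials
  have hAmeas : ∀ (τ : ℝ → Fin J → ℝ),
      Measurable (fun ω => ∑ k, τ r k * Z r ω k) := fun τ =>
    Finset.measurable_sum _ fun k _ => measurable_const.mul ((hZmeas r).eval)
  have hAnp : ∀ (τ : ℝ → Fin J → ℝ), (∀ k, τ r k ≤ 0) → ∀ ω,
      (∑ k, τ r k * Z r ω k) ≤ 0 := fun τ hτ ω =>
    Finset.sum_nonpos fun k _ => by nlinarith [hτ k, hZ0 r ω k]
  have hEint : ∀ (τ : ℝ → Fin J → ℝ), (∀ k, τ r k ≤ 0) →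
      Integrable (fun ω => Real.exp (∑ k, τ r k * Z r ω k)) (μ r) := by
    intro τ hτ
    apply Integrable.mono' (integrable_const (1:ℝ)) ((hAmeas τ).exp).aestronglyMeasurable
    filter_upwards with ω
    rw [Real.norm_eq_abs, abs_of_pos (Real.exp_pos _)]
    exact Real.exp_le_one_iff.2 (hAnp τ hτ ω)
  have hI1 := hEint θ (hθ r)
  have hI2 := hEint θ' (hθ' r)
  -- integrability of the termwise bounds
  have hrpow : ∀ k : Fin J, (0:ℝ) < r ^ ((k : ℕ) + 1) := fun k => pow_pos hr0 _
  have htermint : ∀ k : Fin J,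
      Integrable (fun ω => |θ r k - θ' r k| * Z r ω k) (μ r) := by
    intro k
    have h := (hint k r ⟨hr0, hr1⟩).const_mul (|θ r k - θ' r k| / r ^ ((k : ℕ) + 1))
    refine h.congr (Filter.Eventually.of_forall fun ω => ?_)
    field_simp
  have hsumint : Integrable (fun ω => ∑ k, |θ r k - θ' r k| * Z r ω k) (μ r) :=
    integrable_finset_sum _ fun k _ => htermint k
  -- the main bound
  rw [Real.norm_eq_abs, ← integral_sub hI1 hI2]
  calc |∫ ω, (Real.exp (∑ k, θ r k * Z r ω k) - Real.exp (∑ k, θ' r k * Z r ω k)) ∂(μ r)|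
      ≤ ∫ ω, |Real.exp (∑ k, θ r k * Z r ω k) - Real.exp (∑ k, θ' r k * Z r ω k)| ∂(μ r) :=
        by simpa [Real.norm_eq_abs] using
          norm_integral_le_integral_norm (μ := μ r)
            (fun ω => Real.exp (∑ k, θ r k * Z r ω k) - Real.exp (∑ k, θ' r k * Z r ω k))
    _ ≤ ∫ ω, ∑ k, |θ r k - θ' r k| * Z r ω k ∂(μ r) := by
        apply integral_mono ((hI1.sub hI2).abs) hsumint
        intro ω
        calc |Real.exp (∑ k, θ r k * Z r ω k) - Real.exp (∑ k, θ' r k * Z r ω k)|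
            ≤ |(∑ k, θ r k * Z r ω k) - ∑ k, θ' r k * Z r ω k| :=
              exp_lip_aux (hAnp θ (hθ r) ω) (hAnp θ' (hθ' r) ω)
          _ = |∑ k, (θ r k - θ' r k) * Z r ω k| := by rw [← Finset.sum_sub_distrib]; congr 1; exact Finset.sum_congr rfl fun k _ => by ring
          _ ≤ ∑ k, |(θ r k - θ' r k) * Z r ω k| := Finset.abs_sum_le_sum_abs _ _
          _ = ∑ k, |θ r k - θ' r k| * Z r ω k := by
              refine Finset.sum_congr rfl fun k _ => ?_
              rw [abs_mul, abs_of_nonneg (hZ0 r ω k)]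
    _ = ∑ k, ∫ ω, |θ r k - θ' r k| * Z r ω k ∂(μ r) :=
        integral_finset_sum _ fun k _ => htermint k
    _ ≤ ε r := by
        apply Finset.sum_le_sum
        intro k _
        have heq : (fun ω => |θ r k - θ' r k| * Z r ω k)
            = fun ω => (|θ r k - θ' r k| / r ^ ((k : ℕ) + 1)) *
                (r ^ ((k : ℕ) + 1) * Z r ω k) := by
          funext ω; field_simp
        rw [heq, integral_const_mul]
        have habs : |(θ r k - θ' r k) / r ^ ((k : ℕ) + 1)|
            = |θ r k - θ' r k| / r ^ ((k : ℕ) + 1) := by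
          rw [abs_div, abs_of_pos (hrpow k)]
        rw [habs]
        have hnn : 0 ≤ |θ r k - θ' r k| / r ^ ((k : ℕ) + 1) :=
          div_nonneg (abs_nonneg _) (hrpow k).le
        have hIC : ∫ ω, r ^ ((k : ℕ) + 1) * Z r ω k ∂(μ r) ≤ C' k :=
          le_trans (hsup k r ⟨hr0, hr1⟩) (le_max_left _ _)
        exact mul_le_mul_of_nonneg_left hIC hnn
end

section
/- Let J be a positive integer and d ∈ ℝ^J with d_j > 0 for all j. For each r ∈ (0,1), let φ^{(r)} : ℝ^J → ℝ be a function satisfying 0 ≤ φ^{(r)}(θ) ≤ 1 for all θ ∈ ℝ^J with θ ≤ 0 (coordinatewise). Suppose that for every η ∈ ℝ^J with η ≤ 0 and every j ∈ {1,…,J}: φ^{(r)}(0,…,0, r^{j} η_j, r^{j+1} η_{j+1}, …, r^{J} η_J) − (1/(1 − d_j η_j)) · φ^{(r)}(0,…,0, r^{j+1} η_{j+1}, …, r^{J} η_J) → 0 as r → 0⁺, where for j = J the second factor φ^{(r)}(0,…,0) is replaced by the constant 1. Then for every η ∈ ℝ^J with η ≤ 0, φ^{(r)}(r η_1, r² η_2,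 …, r^{J} η_J) → Π_{j=1}^J 1/(1 − d_j η_j) as r → 0⁺. -/
open Filter Topology Finset

/-- Induction step to product-form limit: if for each `j` the transform identity
`φ^{(r)}(0,…,0,r^jη_j,…,r^Jη_J) - (1-d_jη_j)⁻¹ φ^{(r)}(0,…,0,r^{j+1}η_{j+1},…,r^Jη_J) → 0`
holds (the second factor being `1` when `j = J`), then
`φ^{(r)}(rη_1,…,r^Jη_J) → ∏_j (1-d_jη_j)⁻¹` for every `η ≤ 0`.
(Station `j ∈ {1,…,J}` corresponds to `j : Fin J`, so `r^j` is rendered `r^(j+1)`.) -/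
theorem stmt16 (J : ℕ) (hJ : 0 < J) (d : Fin J → ℝ) (hd : ∀ j, 0 < d j)
    (φ : ℝ → (Fin J → ℝ) → ℝ)
    (hφ01 : ∀ r ∈ Set.Ioo (0 : ℝ) 1, ∀ θ : Fin J → ℝ, (∀ k, θ k ≤ 0) →
      0 ≤ φ r θ ∧ φ r θ ≤ 1)
    (hstep : ∀ η : Fin J → ℝ, (∀ k, η k ≤ 0) → ∀ j : Fin J,
      Tendsto (fun r : ℝ =>
          φ r (fun k => if j ≤ k then r ^ ((k : ℕ) + 1) * η k else 0) -
            (1 / (1 - d j * η j)) *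
              (if (j : ℕ) + 1 < J then
                φ r (fun k => if j < k then r ^ ((k : ℕ) + 1) * η k else 0)
              else 1))
        (𝓝[>] 0) (𝓝 0)) :
    ∀ η : Fin J → ℝ, (∀ k, η k ≤ 0) →
      Tendsto (fun r : ℝ => φ r (fun k => r ^ ((k : ℕ) + 1) * η k))
        (𝓝[>] 0) (𝓝 (∏ j, 1 / (1 - d j * η j))) := by
  intro η hη
  have key : ∀ t m (hm : m < J), J - m = t + 1 →
      Tendsto (fun r : ℝ => φ r (fun k => if m ≤ (k : ℕ) then r ^ ((k : ℕ) + 1) * η k else 0))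
        (𝓝[>] 0)
        (𝓝 (∏ k ∈ Finset.univ.filter (fun k : Fin J => m ≤ (k : ℕ)),
          1 / (1 - d k * η k))) := by
    intro t
    induction t with
    | zero =>
      intro m hm heq
      have h1 := hstep η hη ⟨m, hm⟩
      simp only [Fin.le_def, Fin.lt_def] at h1
      simp only [if_neg (show ¬(((⟨m, hm⟩ : Fin J) : ℕ) + 1 < J) by simp; omega), mul_one] at h1
      have h2 := h1.add (tendsto_const_nhds
        (x := 1 / (1 - d ⟨m, hm⟩ * η ⟨m, hm⟩)) (f := 𝓝[>] (0:ℝ)))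
      simp only [sub_add_cancel, zero_add] at h2
      have hset : Finset.univ.filter (fun k : Fin J => m ≤ (k : ℕ)) = {⟨m, hm⟩} := by
        ext k; simp [Fin.ext_iff]; omega
      rw [hset, Finset.prod_singleton]
      exact h2
    | succ t ih =>
      intro m hm heq
      have hm1 : m + 1 < J := by omega
      have ih1 := ih (m + 1) hm1 (by omega)
      have h1 := hstep η hη ⟨m, hm⟩
      simp only [Fin.le_def, Fin.lt_def] at h1
      simp only [if_pos (show (((⟨m, hm⟩ : Fin J) : ℕ) + 1 < J) by simpa using hm1)] at h1
      have h2 := h1.add (ih1.const_mul (1 / (1 - d ⟨m, hm⟩ * η ⟨m, hm⟩)))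
      have heqf : (fun r : ℝ =>
          (φ r (fun k => if ((⟨m, hm⟩ : Fin J) : ℕ) ≤ (k : ℕ) then r ^ ((k : ℕ) + 1) * η k else 0) -
            1 / (1 - d ⟨m, hm⟩ * η ⟨m, hm⟩) *
              φ r (fun k => if ((⟨m, hm⟩ : Fin J) : ℕ) < (k : ℕ) then r ^ ((k : ℕ) + 1) * η k else 0)) +
            1 / (1 - d ⟨m, hm⟩ * η ⟨m, hm⟩) *
              φ r (fun k => if m + 1 ≤ (k : ℕ) then r ^ ((k : ℕ) + 1) * η k else 0))
          = (fun r : ℝ => φ r (fun k => if m ≤ (k : ℕ) then r ^ ((k : ℕ) + 1) * η k else 0)) := by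
        funext r
        have : (fun k : Fin J => if ((⟨m, hm⟩ : Fin J) : ℕ) < (k : ℕ) then
            r ^ ((k : ℕ) + 1) * η k else 0)
            = (fun k : Fin J => if m + 1 ≤ (k : ℕ) then r ^ ((k : ℕ) + 1) * η k else 0) := by
          funext k
          simp only [Fin.val_mk, Nat.lt_iff_add_one_le]
        rw [this]
        ring
      rw [heqf] at h2
      have hnot : (⟨m, hm⟩ : Fin J) ∉
          Finset.univ.filter (fun k : Fin J => m + 1 ≤ (k : ℕ)) := by simp
      have hset : Finset.univ.filter (fun k : Fin J => m ≤ (k : ℕ)) =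
          insert (⟨m, hm⟩ : Fin J) (Finset.univ.filter (fun k : Fin J => m + 1 ≤ (k : ℕ))) := by
        ext k; simp [Fin.ext_iff]; omega
      rw [hset, Finset.prod_insert hnot]
      simpa using h2
  have h0 := key (J - 1) 0 hJ (by omega)
  have hset : Finset.univ.filter (fun k : Fin J => 0 ≤ (k : ℕ)) = Finset.univ := by
    ext k; simp
  rw [hset] at h0
  simpa using h0
end

section
/- Let J be a positive integer, δ₀ > 0, j ∈ {1,…,J} and λ > 0. For each r ∈ (0,1), let R^{(r)} be a nonnegative random variable and A_r a measurable event on a probability space, and let μ^{(r)} > 0 be reals such that ℙ(A_r) = r^{j} / μ^{(r)} for all r, μ^{(r)} → λ as r → 0⁺, and sup_{r ∈ (0,1)} 𝔼[(R^{(r)})^{J+δ₀}] < ∞. Then r · 𝔼[R^{(r)} · 1_{A_r}] / ℙ(A_r) → 0 as r → 0⁺. -/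
open MeasureTheory Filter Topology

lemma stmt19_aux (p M x : ℝ) (hp : 1 ≤ p) (hM : 0 < M) (hx : 0 ≤ x) :
    x ≤ M + x ^ p * M ^ (1 - p) := by
  rcases le_or_gt x M with h | h
  · have : (0:ℝ) ≤ x ^ p * M ^ (1 - p) :=
      mul_nonneg (Real.rpow_nonneg hx p) (Real.rpow_nonneg hM.le _)
    linarith
  · have hx0 : 0 < x := hM.trans h
    have h1 : x ^ (1 - p) ≤ M ^ (1 - p) :=
      Real.rpow_le_rpow_of_nonpos hM h.le (by linarith)
    have h2 : x ^ p * x ^ (1 - p) ≤ x ^ p * M ^ (1 - p) :=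
      mul_le_mul_of_nonneg_left h1 (Real.rpow_nonneg hx0.le p)
    have h3 : x ^ p * x ^ (1 - p) = x := by
      rw [← Real.rpow_add hx0]; simp
    have : (0:ℝ) < M := hM
    nlinarith [h2, h3]

/-- If `ℙ(A_r) = r^j/μ^{(r)}` with `μ^{(r)} → λ > 0` and the `(J+δ₀)`-th moments of the
nonnegative `R^{(r)}` are uniformly bounded, then
`r 𝔼[R^{(r)} 1_{A_r}]/ℙ(A_r) → 0` as `r → 0⁺`. -/
theorem stmt19 (J : ℕ) (hJ : 0 < J) (δ₀ : ℝ) (hδ₀ : 0 < δ₀)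
    (j : ℕ) (hj1 : 1 ≤ j) (hjJ : j ≤ J) (lam : ℝ) (hlam : 0 < lam)
    {Ω : ℝ → Type*} [∀ r, MeasurableSpace (Ω r)]
    (μ : ∀ r : ℝ, Measure (Ω r)) (hprob : ∀ r, IsProbabilityMeasure (μ r))
    (R : ∀ r : ℝ, Ω r → ℝ) (hRmeas : ∀ r, Measurable (R r)) (hR0 : ∀ r ω, 0 ≤ R r ω)
    (A : ∀ r : ℝ, Set (Ω r)) (hA : ∀ r, MeasurableSet (A r))
    (m : ℝ → ℝ) (hm : ∀ r ∈ Set.Ioo (0 : ℝ) 1, 0 < m r)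
    (hPA : ∀ r ∈ Set.Ioo (0 : ℝ) 1, μ r (A r) = ENNReal.ofReal (r ^ j / m r))
    (hmlim : Tendsto m (𝓝[>] 0) (𝓝 lam))
    (hint : ∀ r ∈ Set.Ioo (0 : ℝ) 1, Integrable (fun ω => R r ω ^ ((J : ℝ) + δ₀)) (μ r))
    (C : ℝ)
    (hsup : ∀ r ∈ Set.Ioo (0 : ℝ) 1, ∫ ω, R r ω ^ ((J : ℝ) + δ₀) ∂(μ r) ≤ C) :
    Tendsto (fun r : ℝ => r * (∫ ω in A r, R r ω ∂(μ r)) / (μ r (A r)).toReal)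
      (𝓝[>] 0) (𝓝 0) := by
  set p : ℝ := (J : ℝ) + δ₀ with hpdef
  have hp1 : 1 < p := by
    have : (1:ℝ) ≤ (J:ℝ) := by exact_mod_cast hJ
    simp only [hpdef]; linarith
  have hp0 : 0 < p := by linarith
  have hjp : (j:ℝ) < p := by
    have : (j:ℝ) ≤ (J:ℝ) := by exact_mod_cast hjJ
    simp only [hpdef]; linarith
  set a : ℝ := 1 - (j:ℝ)/p with hadef
  have ha : 0 < a := by
    have : (j:ℝ)/p < 1 := (div_lt_one hp0).mpr hjp
    simp only [hadef]; linarith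
  have hC : 0 ≤ C := by
    have hmem : (1/2 : ℝ) ∈ Set.Ioo (0:ℝ) 1 := by norm_num
    have := hsup (1/2) hmem
    have hnn : 0 ≤ ∫ ω, R (1/2) ω ^ p ∂(μ (1/2)) :=
      integral_nonneg fun ω => Real.rpow_nonneg (hR0 _ ω) p
    linarith
  -- upper bound function
  have key : ∀ r ∈ Set.Ioo (0:ℝ) 1,
      r * (∫ ω in A r, R r ω ∂(μ r)) / (μ r (A r)).toReal ≤ r ^ a * (1 + C * m r) := by
    intro r hr
    obtain ⟨hr0, hr1⟩ := hr
    have hmr := hm r ⟨hr0, hr1⟩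
    set M : ℝ := r ^ (-((j:ℝ)/p)) with hMdef
    have hM0 : 0 < M := Real.rpow_pos_of_pos hr0 _
    set P : ℝ := (μ r (A r)).toReal with hPdef
    have hPval : P = r ^ j / m r := by
      rw [hPdef, hPA r ⟨hr0, hr1⟩, ENNReal.toReal_ofReal
        (div_nonneg (pow_nonneg hr0.le j) hmr.le)]
    have hPpos : 0 < P := by
      rw [hPval]; exact div_pos (pow_pos hr0 j) hmr
    have hBint : Integrable (fun ω => M + R r ω ^ p * M ^ (1 - p)) (μ r) :=
      (integrable_const M).add ((hint r ⟨hr0, hr1⟩).mul_const _)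
    have hptwise : ∀ ω, R r ω ≤ M + R r ω ^ p * M ^ (1 - p) :=
      fun ω => stmt19_aux p M (R r ω) hp1.le hM0 (hR0 r ω)
    have hRint : Integrable (R r) (μ r) := by
      refine hBint.mono' (hRmeas r).aestronglyMeasurable (ae_of_all _ fun ω => ?_)
      rw [Real.norm_of_nonneg (hR0 r ω)]
      exact hptwise ω
    have I1 : (∫ ω in A r, R r ω ∂(μ r)) ≤
        ∫ ω in A r, (M + R r ω ^ p * M ^ (1 - p)) ∂(μ r) :=
      setIntegral_mono_on hRint.integrableOn hBint.integrableOn (hA r)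
        (fun ω _ => hptwise ω)
    have I2 : (∫ ω in A r, (M + R r ω ^ p * M ^ (1 - p)) ∂(μ r)) =
        M * P + (∫ ω in A r, R r ω ^ p ∂(μ r)) * M ^ (1 - p) := by
      rw [integral_add ((integrableOn_const_iff (C := M)).mpr (Or.inr (measure_lt_top _ _)))
        ((hint r ⟨hr0, hr1⟩).integrableOn.mul_const _), setIntegral_const,
        integral_mul_const, smul_eq_mul]
      rw [hPdef, measureReal_def]; ring
    have I3 : (∫ ω in A r, R r ω ^ p ∂(μ r)) ≤ C :=
      le_trans (setIntegral_le_integral (hint r ⟨hr0, hr1⟩)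
        (ae_of_all _ fun ω => Real.rpow_nonneg (hR0 r ω) p)) (hsup r ⟨hr0, hr1⟩)
    have I4 : (∫ ω in A r, R r ω ∂(μ r)) ≤ M * P + C * M ^ (1 - p) := by
      refine (I1.trans_eq I2).trans ?_
      have := mul_le_mul_of_nonneg_right I3 (Real.rpow_nonneg hM0.le (1 - p))
      linarith
    have hnum : r * (∫ ω in A r, R r ω ∂(μ r)) ≤ r * (M * P + C * M ^ (1 - p)) :=
      mul_le_mul_of_nonneg_left I4 hr0.le
    have step : r * (∫ ω in A r, R r ω ∂(μ r)) / P ≤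
        r * (M * P + C * M ^ (1 - p)) / P := by gcongr
    refine step.trans_eq ?_
    -- algebraic identity
    have hM1p : M ^ (1 - p) = r ^ ((j:ℝ)/p * (p - 1)) := by
      rw [hMdef, ← Real.rpow_mul hr0.le]
      congr 1; ring
    have hrj : (r:ℝ) ^ j = r ^ ((j:ℝ)) := (Real.rpow_natCast r j).symm
    rw [hPval, hM1p, hMdef, hrj]
    have hD : r ^ ((j:ℝ)) ≠ 0 := (Real.rpow_pos_of_pos hr0 _).ne'
    have t1 : r * r ^ (-((j:ℝ)/p)) = r ^ a := by
      rw [show a = 1 + -((j:ℝ)/p) by rw [hadef]; ring, Real.rpow_add hr0, Real.rpow_one]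
    have t2 : r * r ^ ((j:ℝ)/p*(p-1)) / r ^ ((j:ℝ)) = r ^ a := by
      rw [show a = 1 + (j:ℝ)/p*(p-1) - (j:ℝ) by rw [hadef]; field_simp; ring,
        Real.rpow_sub hr0, Real.rpow_add hr0, Real.rpow_one]
    calc r * (r ^ (-((j:ℝ)/p)) * (r ^ ((j:ℝ)) / m r) + C * r ^ ((j:ℝ)/p*(p-1))) /
          (r ^ ((j:ℝ)) / m r)
        = r * r ^ (-((j:ℝ)/p)) + C * m r * (r * r ^ ((j:ℝ)/p*(p-1)) / r ^ ((j:ℝ))) := by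
          field_simp
      _ = r ^ a * (1 + C * m r) := by rw [t1, t2]; ring
  -- limits
  have hup : Tendsto (fun r : ℝ => r ^ a * (1 + C * m r)) (𝓝[>] 0) (𝓝 0) := by
    have h1 : Tendsto (fun r : ℝ => r ^ a) (𝓝[>] 0) (𝓝 0) := by
      have := (Real.continuousAt_rpow_const 0 a (Or.inr ha.le)).tendsto
      rw [Real.zero_rpow ha.ne'] at this
      exact this.mono_left nhdsWithin_le_nhds
    have h2 : Tendsto (fun r : ℝ => 1 + C * m r) (𝓝[>] 0) (𝓝 (1 + C * lam)) :=
      tendsto_const_nhds.add (tendsto_const_nhds.mul hmlim)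
    simpa using h1.mul h2
  have hlow : Tendsto (fun _ : ℝ => (0:ℝ)) (𝓝[>] 0) (𝓝 0) := tendsto_const_nhds
  refine tendsto_of_tendsto_of_tendsto_of_le_of_le' hlow hup ?_ ?_
  · filter_upwards [Ioo_mem_nhdsGT_of_mem (by constructor <;> norm_num :
      (0:ℝ) ∈ Set.Ico (0:ℝ) 1)] with r hr
    exact div_nonneg (mul_nonneg hr.1.le
      (setIntegral_nonneg (hA r) fun ω _ => hR0 r ω)) ENNReal.toReal_nonneg
  · filter_upwards [Ioo_mem_nhdsGT_of_mem (by constructor <;> norm_num :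
      (0:ℝ) ∈ Set.Ico (0:ℝ) 1)] with r hr
    exact key r hr
end
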